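/- arXiv:2402.08886 — 5 statements merged into one kernel-verified Lean document; each statement's English description precedes it below -/
import Mathlib

section
/- The number of lower-order ideals of width m in the poset of positive noncompact roots of su(p,q) equals C(p+q, m) - C(p+q, m-1). Concretely: for the poset P = {(i,j) : 1 ≤ i ≤ p < j ≤ p+q} with partial order (i,j) ≤ (i',j') iff i ≥ i' and j ≤ j', the number of lower-order ideals (downward-closed subsets) of P whose maximal antichain has cardinality m equals C(p+q, m) - C(p+q, m-1), for 0 ≤ m ≤ min(p,q). -/
/-!
An antichain of `P p q` has distinct rows and distinct columns, so by sorting it an ideal contains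
an antichain of size `k` iff it contains the diagonal `{(p + t - k, p + t) : 1 ≤ t ≤ k}`; the
ideals of width `m` are those containing the `m`-th diagonal but not the `(m + 1)`-st. The ideals
containing the `k`-th diagonal number `C(p + q, p) - C(p + q, k - 1)`: according as the corner
`(p, p + q)` lies outside or inside the ideal, the ideal lives in the box with one column fewer,
or it is the full last row together with an ideal of the box with one row fewer containing the
`(k - 1)`-st diagonal, so both sides satisfy Pascal's recurrence.
-/

namespace Stmt0

/-- The order on the poset of positive noncompact roots of `su(p,q)`:
`(i,j) ≤ (i',j')` iff `i ≥ i'` and `j ≤ j'`. -/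
def le (a b : ℕ × ℕ) : Prop := b.1 ≤ a.1 ∧ a.2 ≤ b.2

/-- The poset `P = {(i,j) : 1 ≤ i ≤ p < j ≤ p+q}`. -/
def P (p q : ℕ) : Finset (ℕ × ℕ) := Finset.Icc 1 p ×ˢ Finset.Icc (p + 1) (p + q)

/-- `Y` is a lower-order ideal (downward-closed subset) of `P p q`. -/
def IsLowerIdeal (p q : ℕ) (Y : Finset (ℕ × ℕ)) : Prop :=
  Y ⊆ P p q ∧ ∀ x ∈ P p q, ∀ y ∈ Y, le x y → x ∈ Y

/-- `A` is an antichain contained in `Y`. -/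
def IsAntichainIn (Y A : Finset (ℕ × ℕ)) : Prop :=
  A ⊆ Y ∧ ∀ a ∈ A, ∀ b ∈ A, a ≠ b → ¬ le a b ∧ ¬ le b a

/-- The width of `Y` (maximal cardinality of an antichain in `Y`) is `m`. -/
def WidthIs (Y : Finset (ℕ × ℕ)) (m : ℕ) : Prop :=
  (∃ A, IsAntichainIn Y A ∧ A.card = m) ∧ ∀ A, IsAntichainIn Y A → A.card ≤ m

open Finset

-- Rows `1, …, p` and columns `a + 1, …, a + q`; `P p q = box p p q` by `rfl`. The column offset `a`
-- lets the recursion delete the last row without renumbering the columns.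
def box (a p q : ℕ) : Finset (ℕ × ℕ) := Icc 1 p ×ˢ Icc (a + 1) (a + q)

def row (a i q : ℕ) : Finset (ℕ × ℕ) := {i} ×ˢ Icc (a + 1) (a + q)

def IsLowerIdealIn (B Y : Finset (ℕ × ℕ)) : Prop :=
  Y ⊆ B ∧ ∀ x ∈ B, ∀ y ∈ Y, le x y → x ∈ Y

-- `diag a r k = {(r + t - k, a + t) : 1 ≤ t ≤ k}`, ending in the cell `(r, a + k)`.
def diag (a : ℕ) : ℕ → ℕ → Finset (ℕ × ℕ)
  | _, 0 => ∅
  | r, k + 1 => insert (r, a + k + 1) (diag a (r - 1) k)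

open Classical in
noncomputable def idealsContainingDiag (a p q k : ℕ) : Finset (Finset (ℕ × ℕ)) :=
  {Y ∈ (box a p q).powerset | IsLowerIdealIn (box a p q) Y ∧ diag a p k ⊆ Y}

variable {a p q r k : ℕ} {x y : ℕ × ℕ} {B R Y A : Finset (ℕ × ℕ)}

lemma mem_box : x ∈ box a p q ↔ (1 ≤ x.1 ∧ x.1 ≤ p) ∧ a + 1 ≤ x.2 ∧ x.2 ≤ a + q := by
  simp only [box, mem_product, mem_Icc]

lemma mem_row : x ∈ row a p q ↔ x.1 = p ∧ a + 1 ≤ x.2 ∧ x.2 ≤ a + q := by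
  simp only [row, mem_product, mem_singleton, mem_Icc]

lemma row_subset_box : row a (p + 1) q ⊆ box a (p + 1) q := fun x hx => by
  rw [mem_row] at hx; rw [mem_box]; omega

lemma box_sdiff_row : box a (p + 1) q \ row a (p + 1) q = box a p q := by
  ext x; simp only [mem_sdiff, mem_box, mem_row]; omega

lemma disjoint_box_row : Disjoint (box a p q) (row a (p + 1) q) :=
  disjoint_left.2 fun x hx hx' => by rw [mem_box] at hx; rw [mem_row] at hx'; omega

lemma mem_row_of_le (hx : x ∈ box a (p + 1) q) (hy : y ∈ row a (p + 1) q) (hxy : le x y) :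
    x ∈ row a (p + 1) q := by
  rw [mem_box] at hx; rw [mem_row] at hy ⊢; unfold le at hxy; omega

lemma isLowerIdealIn_iff_of_subset {B' : Finset (ℕ × ℕ)} (hB' : B' ⊆ B)
    (hdown : ∀ x ∈ B, ∀ y ∈ B', le x y → x ∈ B') :
    IsLowerIdealIn B' Y ↔ IsLowerIdealIn B Y ∧ Y ⊆ B' :=
  ⟨fun h => ⟨⟨h.1.trans hB', fun x hx y hy hxy => h.2 x (hdown x hx y (h.1 hy) hxy) y hy hxy⟩, h.1⟩,
    fun h => ⟨h.2, fun x hx => h.1.2 x (hB' hx)⟩⟩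

lemma isLowerIdealIn_union_iff (hRB : R ⊆ B) (hdown : ∀ x ∈ B, ∀ y ∈ R, le x y → x ∈ R)
    (hYR : Disjoint Y R) : IsLowerIdealIn B (Y ∪ R) ↔ IsLowerIdealIn (B \ R) Y := by
  constructor
  · rintro ⟨hsub, hclosed⟩
    refine ⟨fun y hy => mem_sdiff.2 ⟨hsub (mem_union_left _ hy), disjoint_left.1 hYR hy⟩,
      fun x hx y hy hxy => ?_⟩
    rw [mem_sdiff] at hx
    exact (mem_union.1 (hclosed x hx.1 y (mem_union_left _ hy) hxy)).resolve_right hx.2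
  · rintro ⟨hsub, hclosed⟩
    refine ⟨union_subset (hsub.trans sdiff_subset) hRB, fun x hx y hy hxy => ?_⟩
    by_cases hxR : x ∈ R
    · exact mem_union_right _ hxR
    · rcases mem_union.1 hy with hy | hy
      · exact mem_union_left _ (hclosed x (mem_sdiff.2 ⟨hx, hxR⟩) y hy hxy)
      · exact absurd (hdown x hx y hy hxy) hxR

lemma isLowerIdealIn_box_iff :
    IsLowerIdealIn (box a p q) Y ↔
      IsLowerIdealIn (box a p (q + 1)) Y ∧ (p, a + q + 1) ∉ Y := by
  have hsub : box a p q ⊆ box a p (q + 1) := fun x hx => by rw [mem_box] at hx ⊢; omega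
  have hdown : ∀ x ∈ box a p (q + 1), ∀ y ∈ box a p q, le x y → x ∈ box a p q :=
    fun x hx y hy hxy => by rw [mem_box] at hx hy ⊢; unfold le at hxy; omega
  rw [isLowerIdealIn_iff_of_subset hsub hdown]
  refine and_congr_right fun hY => ⟨fun hYsub hc => ?_, fun hc y hy => ?_⟩
  · have := mem_box.1 (hYsub hc)
    dsimp only at this
    omega
  have hy' := mem_box.1 (hY.1 hy)
  rw [mem_box]
  refine ⟨hy'.1, hy'.2.1, Nat.le_of_lt_succ (lt_of_le_of_ne hy'.2.2 fun h => hc ?_)⟩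
  exact hY.2 _ (mem_box.2 (by omega)) y hy ⟨hy'.1.2, h.ge⟩

lemma isLowerIdealIn_union_row_iff (hYR : Disjoint Y (row a (p + 1) q)) :
    IsLowerIdealIn (box a (p + 1) q) (Y ∪ row a (p + 1) q) ↔ IsLowerIdealIn (box a p q) Y := by
  rw [isLowerIdealIn_union_iff row_subset_box (fun _ hx _ hy => mem_row_of_le hx hy) hYR,
    box_sdiff_row]

lemma IsLowerIdealIn.row_subset_iff (hY : IsLowerIdealIn (box a (p + 1) (q + 1)) Y) :
    row a (p + 1) (q + 1) ⊆ Y ↔ (p + 1, a + q + 1) ∈ Y := by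
  refine ⟨fun h => h (mem_row.2 (by omega)), fun hc x hx => hY.2 x (row_subset_box hx) _ hc ?_⟩
  rw [mem_row] at hx
  exact ⟨hx.1.ge, by omega⟩

lemma diag_bounds (hx : x ∈ diag a r k) : x.1 ≤ r ∧ x.2 ≤ a + k := by
  induction k generalizing r with
  | zero => simp [diag] at hx
  | succ k ih =>
    rcases mem_insert.1 hx with rfl | hx
    · simp
    · have := ih hx; omega

lemma card_diag (a r k : ℕ) : #(diag a r k) = k := by
  induction k generalizing r with
  | zero => rfl
  | succ k ih =>
    rw [diag, card_insert_of_notMem fun h => by have := (diag_bounds h).2; simp at this, ih]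

lemma diag_eq_empty_iff : diag a r k = ∅ ↔ k = 0 := by
  cases k <;> simp [diag]

lemma diag_subset_union_row_iff (hk : k ≤ q) :
    diag a (p + 1) k ⊆ Y ∪ row a (p + 1) q ↔ diag a p (k - 1) ⊆ Y := by
  cases k with
  | zero => simp [diag]
  | succ k =>
    have hdisj : Disjoint (diag a p k) (row a (p + 1) q) :=
      disjoint_left.2 fun x hx hx' => by have := diag_bounds hx; rw [mem_row] at hx'; omega
    rw [diag, insert_subset_iff, Nat.add_sub_cancel, Nat.add_sub_cancel]
    exact ⟨fun h => Disjoint.left_le_of_le_sup_right h.2 hdisj,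
      fun h => ⟨mem_union_right _ (mem_row.2 (by omega)), h.trans subset_union_left⟩⟩

lemma IsAntichainIn.lt_or_lt (hA : IsAntichainIn Y A) (hx : x ∈ A) (hy : y ∈ A) (hxy : x ≠ y) :
    x.1 < y.1 ∧ x.2 < y.2 ∨ y.1 < x.1 ∧ y.2 < x.2 := by
  have := hA.2 x hx y hy hxy
  unfold le at this
  omega

lemma IsAntichainIn.mono {A' : Finset (ℕ × ℕ)} (hA : IsAntichainIn Y A) (h : A' ⊆ A) :
    IsAntichainIn Y A' :=
  ⟨h.trans hA.1, fun x hx y hy => hA.2 x (h hx) y (h hy)⟩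

lemma IsAntichainIn.insert (hA : IsAntichainIn Y A) (hc : y ∈ Y)
    (hlt : ∀ x ∈ A, x.1 < y.1 ∧ x.2 < y.2) : IsAntichainIn Y (insert y A) := by
  refine ⟨insert_subset hc hA.1, fun x hx z hz hxz => ?_⟩
  rcases mem_insert.1 hx with rfl | hxA <;> rcases mem_insert.1 hz with rfl | hzA
  · exact absurd rfl hxz
  · have := hlt z hzA; unfold le; omega
  · have := hlt x hxA; unfold le; omega
  · exact hA.2 x hxA z hzA hxz

lemma isAntichainIn_diag (hD : diag a r k ⊆ Y) (hpos : ∀ x ∈ Y, 1 ≤ x.1) :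
    IsAntichainIn Y (diag a r k) := by
  induction k generalizing r with
  | zero => exact ⟨empty_subset _, by simp [diag]⟩
  | succ k ih =>
    rw [diag, insert_subset_iff] at hD
    refine (ih hD.2).insert hD.1 fun x hx => ?_
    have := diag_bounds hx
    have := hpos x (hD.2 hx)
    dsimp only
    omega

-- Induct on `A`, splitting off its element `c` with the largest first coordinate: the rest lies
-- in rows `< c.1`, and `c.2 > a + #A` because the second coordinates of `A` are distinct.
lemma diag_card_subset_of_isAntichainIn (hY : IsLowerIdealIn (box a p q) Y)
    (hA : IsAntichainIn Y A) (hr : r ≤ p) (hAr : ∀ x ∈ A, x.1 ≤ r) : diag a r #A ⊆ Y := by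
  revert hA r
  refine Finset.induction_on_max_value Prod.fst
    (motive := fun A => ∀ {r}, IsAntichainIn Y A → r ≤ p → (∀ x ∈ A, x.1 ≤ r) → diag a r #A ⊆ Y) A
    (fun _ _ _ => by simp [diag]) fun c A hcA hmax ih {r} hA hr hAr => ?_
  have hlt : ∀ x ∈ A, x.1 < c.1 ∧ x.2 < c.2 := fun x hx => by
    have := hA.lt_or_lt (mem_insert_of_mem hx) (mem_insert_self c A) (ne_of_mem_of_not_mem hx hcA)
    have := hmax x hx
    omega
  have hcY := hA.1 (mem_insert_self c A)
  have hc := mem_box.1 (hY.1 hcY)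
  have hcr := hAr c (mem_insert_self c A)
  have hcard : #A ≤ c.2 - a - 1 := by
    rw [← Nat.card_Ioo]
    refine card_le_card_of_injOn Prod.snd (fun x hx => ?_) fun x hx z hz hxz => ?_
    · have := mem_box.1 (hY.1 (hA.1 (mem_insert_of_mem hx)))
      have := hlt x hx
      simp only [coe_Ioo, Set.mem_Ioo]
      omega
    · by_contra hne
      have := hA.lt_or_lt (mem_insert_of_mem hx) (mem_insert_of_mem hz) hne
      omega
  rw [card_insert_of_notMem hcA, diag, insert_subset_iff]
  refine ⟨hY.2 _ (mem_box.2 (by dsimp only; omega)) c hcY ⟨hcr, by dsimp only; omega⟩,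
    ih (hA.mono (subset_insert c A)) (by omega : r - 1 ≤ p) fun x hx => ?_⟩
  have := hlt x hx
  omega

lemma exists_isAntichainIn_card_iff (hY : IsLowerIdealIn (box a p q) Y) :
    (∃ A, IsAntichainIn Y A ∧ #A = k) ↔ diag a p k ⊆ Y := by
  constructor
  · rintro ⟨A, hA, rfl⟩
    exact diag_card_subset_of_isAntichainIn hY hA le_rfl fun x hx =>
      (mem_box.1 (hY.1 (hA.1 hx))).1.2
  · intro hD
    exact ⟨diag a p k, isAntichainIn_diag hD fun x hx => (mem_box.1 (hY.1 hx)).1.1, card_diag a p k⟩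

lemma IsAntichainIn.exists_card_eq (hA : IsAntichainIn Y A) (hk : k ≤ #A) :
    ∃ A', IsAntichainIn Y A' ∧ #A' = k :=
  let ⟨A', hA', hcard⟩ := exists_subset_card_eq hk
  ⟨A', hA.mono hA', hcard⟩

lemma widthIs_iff (hY : IsLowerIdealIn (box a p q) Y) {m : ℕ} :
    WidthIs Y m ↔ diag a p m ⊆ Y ∧ ¬ diag a p (m + 1) ⊆ Y := by
  rw [WidthIs, ← exists_isAntichainIn_card_iff hY, ← exists_isAntichainIn_card_iff hY]
  refine and_congr_right fun _ => ⟨fun hmax ⟨A, hA, hcard⟩ => by have := hmax A hA; omega,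
    fun hnot A hA => ?_⟩
  by_contra! h
  exact hnot (hA.exists_card_eq h)

lemma mem_idealsContainingDiag :
    Y ∈ idealsContainingDiag a p q k ↔ IsLowerIdealIn (box a p q) Y ∧ diag a p k ⊆ Y := by
  classical
  rw [idealsContainingDiag, mem_filter, mem_powerset]
  exact ⟨fun h => h.2, fun h => ⟨h.1.1, h⟩⟩

lemma idealsContainingDiag_succ_subset :
    idealsContainingDiag a p q (k + 1) ⊆ idealsContainingDiag a p q k := fun Y hY => by
  rw [mem_idealsContainingDiag] at hY ⊢
  obtain ⟨A, hA, hcard⟩ := (exists_isAntichainIn_card_iff hY.1).2 hY.2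
  exact ⟨hY.1, (exists_isAntichainIn_card_iff hY.1).1 (hA.exists_card_eq (by omega))⟩

lemma idealsContainingDiag_eq_empty (hqk : q < k) : idealsContainingDiag a p q k = ∅ := by
  obtain ⟨k, rfl⟩ : ∃ j, k = j + 1 := ⟨k - 1, by omega⟩
  refine eq_empty_of_forall_notMem fun Y hY => ?_
  rw [mem_idealsContainingDiag] at hY
  have := mem_box.1 (hY.1.1 (hY.2 (mem_insert_self _ _)))
  dsimp only at this
  omega

lemma card_idealsContainingDiag_of_box_eq_empty (h : box a p q = ∅) :
    #(idealsContainingDiag a p q k) = if k = 0 then 1 else 0 := by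
  have hmem : ∀ Y, Y ∈ idealsContainingDiag a p q k ↔ Y = ∅ ∧ k = 0 := fun Y => by
    rw [mem_idealsContainingDiag, h, ← diag_eq_empty_iff (a := a) (r := p)]
    constructor
    · rintro ⟨⟨hY, -⟩, hD⟩
      obtain rfl := subset_empty.1 hY
      exact ⟨rfl, subset_empty.1 hD⟩
    · rintro ⟨rfl, hD⟩
      exact ⟨⟨Subset.rfl, by simp⟩, hD.le⟩
  split_ifs with hk
  · exact card_eq_one.2 ⟨∅, by ext Y; rw [hmem, mem_singleton]; exact and_iff_left hk⟩
  · exact card_eq_zero.2 (eq_empty_of_forall_notMem fun Y hY => hk ((hmem Y).1 hY).2)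

lemma card_idealsContainingDiag_add_choose_of_eq_zero (h : p = 0 ∨ q = 0) (hk : k ≤ 1) :
    #(idealsContainingDiag a p q k) + (p + q).choose (p + q + 1 - k) = (p + q).choose p := by
  have hbox : box a p q = ∅ := by rcases h with rfl | rfl <;> simp [box]
  have hC : (p + q).choose p = 1 := by rcases h with rfl | rfl <;> simp
  rw [card_idealsContainingDiag_of_box_eq_empty hbox, hC]
  obtain rfl | rfl : k = 0 ∨ k = 1 := by omega
  · simp
  · simp

lemma filter_corner_notMem_idealsContainingDiag :
    {Y ∈ idealsContainingDiag a p (q + 1) k | (p, a + q + 1) ∉ Y} =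
      idealsContainingDiag a p q k := by
  ext Y
  rw [mem_filter, mem_idealsContainingDiag, mem_idealsContainingDiag,
    isLowerIdealIn_box_iff (q := q)]
  tauto

-- An ideal containing the corner `(p + 1, a + q + 1)` is its last row plus an ideal of the box
-- with one row fewer.
lemma card_filter_corner_mem_idealsContainingDiag (hk : k ≤ q + 1) :
    #{Y ∈ idealsContainingDiag a (p + 1) (q + 1) k | (p + 1, a + q + 1) ∈ Y} =
      #(idealsContainingDiag a p (q + 1) (k - 1)) := by
  set R := row a (p + 1) (q + 1)
  have key : ∀ Y ⊆ box a p (q + 1), Y ∪ R ∈ {Y ∈ idealsContainingDiag a (p + 1) (q + 1) k |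
      (p + 1, a + q + 1) ∈ Y} ↔ Y ∈ idealsContainingDiag a p (q + 1) (k - 1) := fun Y hY => by
    have hYR := disjoint_box_row.mono_left hY
    rw [mem_filter, mem_idealsContainingDiag, mem_idealsContainingDiag,
      isLowerIdealIn_union_row_iff hYR, diag_subset_union_row_iff hk]
    exact ⟨fun h => h.1, fun h => ⟨h, mem_union_right _ (mem_row.2 (by omega))⟩⟩
  have hsplit : ∀ Y ∈ {Y ∈ idealsContainingDiag a (p + 1) (q + 1) k | (p + 1, a + q + 1) ∈ Y},
      Y \ R ⊆ box a p (q + 1) ∧ Y \ R ∪ R = Y := fun Y hY => by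
    rw [mem_filter, mem_idealsContainingDiag] at hY
    refine ⟨box_sdiff_row (a := a) ▸ sdiff_subset_sdiff hY.1.1.1 Subset.rfl, ?_⟩
    exact sdiff_union_of_subset ((hY.1.1.row_subset_iff).2 hY.2)
  refine card_nbij' (· \ R) (· ∪ R) (fun Y hY => ?_) (fun Y hY => ?_) (fun Y hY => ?_)
    fun Y hY => ?_
  · obtain ⟨hsub, hY'⟩ := hsplit Y hY
    exact (key _ hsub).1 (by rw [hY']; exact hY)
  · exact (key Y (mem_idealsContainingDiag.1 hY).1.1).2 hY
  · exact (hsplit Y hY).2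
  · exact union_sdiff_cancel_right (disjoint_box_row.mono_left (mem_idealsContainingDiag.1 hY).1.1)

lemma card_idealsContainingDiag_succ_succ (hk : k ≤ q + 1) :
    #(idealsContainingDiag a (p + 1) (q + 1) k) =
      #(idealsContainingDiag a (p + 1) q k) + #(idealsContainingDiag a p (q + 1) (k - 1)) := by
  rw [← card_filter_add_card_filter_not (fun Y => (p + 1, a + q + 1) ∈ Y),
    filter_corner_notMem_idealsContainingDiag, card_filter_corner_mem_idealsContainingDiag hk,
    add_comm]

lemma choose_add_one_sub_eq_add (n k : ℕ) (hk : k ≤ n + 1) :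
    (n + 1).choose (n + 1 + 1 - k) = n.choose (n + 1 - k) + n.choose (n + 1 - (k - 1)) := by
  rcases k with _ | k
  · simp
  · rw [show n + 1 + 1 - (k + 1) = n - k + 1 by omega, show n + 1 - (k + 1) = n - k by omega,
      show n + 1 - (k + 1 - 1) = n - k + 1 by omega, Nat.choose_succ_succ']

-- `C(p + q, p + q + 1 - k)` is `C(p + q, k - 1)` for `k ≥ 1` and `0` for `k = 0`.
theorem card_idealsContainingDiag_add_choose (a p q k : ℕ) (hk : k ≤ min p q + 1) :
    #(idealsContainingDiag a p q k) + (p + q).choose (p + q + 1 - k) = (p + q).choose p := by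
  induction p generalizing q k with
  | zero => exact card_idealsContainingDiag_add_choose_of_eq_zero (Or.inl rfl) (by simpa using hk)
  | succ p ihp =>
    induction q generalizing k with
    | zero => exact card_idealsContainingDiag_add_choose_of_eq_zero (Or.inr rfl) (by simpa using hk)
    | succ q ihq =>
      rcases Nat.lt_or_ge (q + 1) k with hqk | hqk
      · rw [idealsContainingDiag_eq_empty hqk, card_empty, zero_add]
        congr 1
        omega
      have h₁ := ihq k (by omega)
      have h₂ := ihp (q + 1) (k - 1) (by omega)
      rw [show p + 1 + q = p + q + 1 by ring] at h₁
      rw [show p + (q + 1) = p + q + 1 by ring] at h₂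
      rw [card_idealsContainingDiag_succ_succ hqk, show p + 1 + (q + 1) = p + q + 1 + 1 by ring,
        choose_add_one_sub_eq_add _ _ (by omega), Nat.choose_succ_succ']
      omega

lemma natCard_isLowerIdeal_widthIs (p q m : ℕ) :
    Nat.card {Y : Finset (ℕ × ℕ) // IsLowerIdeal p q Y ∧ WidthIs Y m} =
      #(idealsContainingDiag p p q m \ idealsContainingDiag p p q (m + 1)) := by
  rw [← Nat.card_eq_finsetCard]
  refine Nat.card_congr (Equiv.subtypeEquivRight fun Y => ?_)
  rw [mem_sdiff, mem_idealsContainingDiag, mem_idealsContainingDiag]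
  change IsLowerIdealIn (box p p q) Y ∧ _ ↔ _
  exact ⟨fun ⟨hY, hw⟩ => ⟨⟨hY, ((widthIs_iff hY).1 hw).1⟩, fun h => ((widthIs_iff hY).1 hw).2 h.2⟩,
    fun ⟨⟨hY, h₀⟩, h₁⟩ => ⟨hY, (widthIs_iff hY).2 ⟨h₀, fun h => h₁ ⟨hY, h⟩⟩⟩⟩

lemma choose_add_one_sub (n m : ℕ) (hm : m ≤ n + 1) :
    n.choose (n + 1 - m) = if m = 0 then 0 else n.choose (m - 1) := by
  split_ifs with h
  · simp [h]
  · rw [show n + 1 - m = n - (m - 1) by omega, Nat.choose_symm (by omega)]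

/-- The number of lower-order ideals of width `m` in the poset of positive
noncompact roots of `su(p,q)` equals `C(p+q, m) - C(p+q, m-1)`
(with the convention `C(n, -1) = 0`). -/
theorem count_lower_ideals_su (p q m : ℕ) (hm : m ≤ min p q) :
    Nat.card {Y : Finset (ℕ × ℕ) // IsLowerIdeal p q Y ∧ WidthIs Y m} =
      (p + q).choose m - (if m = 0 then 0 else (p + q).choose (m - 1)) := by
  have h₀ := card_idealsContainingDiag_add_choose p p q m (by omega)
  have h₁ := card_idealsContainingDiag_add_choose p p q (m + 1) (by omega)
  rw [choose_add_one_sub _ _ (by omega)] at h₀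
  rw [choose_add_one_sub _ _ (by omega), if_neg m.succ_ne_zero, Nat.add_sub_cancel] at h₁
  rw [natCard_isLowerIdeal_widthIs, card_sdiff_of_subset idealsContainingDiag_succ_subset]
  omega

end Stmt0
end

section
/- Define w_{p,q}(m) for integers p,q ≥ 0 by w_{p,q}(m) = number of lower-order ideals of width m in the poset {(i,j) : 1 ≤ i ≤ p < j ≤ p+q} with (i,j) ≤ (i',j') iff i ≥ i', j ≤ j'. Then w_{p,q} is symmetric in p and q, and for p ≤ q satisfies: w_{p,q}(m) = w_{p−1,q}(m) + w_{p,q−1}(m−1) if m < p, and w_{p,q}(p) = w_{p,q−1}(p) + w_{p,q−1}(p−1). -/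
namespace Stmt7

/-- The order `(i,j) ≤ (i',j')` iff `i ≥ i'` and `j ≤ j'`. -/
def le (a b : ℕ × ℕ) : Prop := b.1 ≤ a.1 ∧ a.2 ≤ b.2

/-- The poset `{(i,j) : 1 ≤ i ≤ p < j ≤ p+q}`. -/
def P (p q : ℕ) : Finset (ℕ × ℕ) := Finset.Icc 1 p ×ˢ Finset.Icc (p + 1) (p + q)

def IsLowerIdeal (p q : ℕ) (Y : Finset (ℕ × ℕ)) : Prop :=
  Y ⊆ P p q ∧ ∀ x ∈ P p q, ∀ y ∈ Y, le x y → x ∈ Y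

def IsAntichainIn (Y A : Finset (ℕ × ℕ)) : Prop :=
  A ⊆ Y ∧ ∀ a ∈ A, ∀ b ∈ A, a ≠ b → ¬ le a b ∧ ¬ le b a

def WidthIs (Y : Finset (ℕ × ℕ)) (m : ℕ) : Prop :=
  (∃ A, IsAntichainIn Y A ∧ A.card = m) ∧ ∀ A, IsAntichainIn Y A → A.card ≤ m

/-- `w_{p,q}(m)`: the number of lower-order ideals of width `m`. -/
noncomputable def w (p q m : ℕ) : ℕ :=
  Nat.card {Y : Finset (ℕ × ℕ) // IsLowerIdeal p q Y ∧ WidthIs Y m}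

/-!
Row `i` of a lower ideal `Y` of `P p q` is a segment `{(i, j) : p < j ≤ p + λᵢ}`. An antichain has
at most `λₖ` elements in rows `≤ k` (their columns are distinct) and at most `p - k` in rows `> k`,
while with `D = maxₖ (k - λₖ)` the diagonal `{(D + t, p + t) : 1 ≤ t ≤ p - D}` is an antichain in
`Y`; so the width of `Y` is `p - D`.

The reflection `(i, j) ↦ (p + q + 1 - j, p + q + 1 - i)` maps the ideals of `P p q` onto those of
`P q p`, which gives the symmetry. For the recursion, split the ideals by whether they contain
`(1, p + 1)`. If not, the first row is empty and the shift by `(-1, -1)` identifies `Y` with an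
ideal of `P (p - 1) q` of the same width. If so, `Y` contains the whole column `p + 1`; deleting it
lowers every `λᵢ` by one and leaves an ideal `Y'` of `P p (q - 1)` with
`width Y = min p (width Y' + 1)`.
-/

open Finset

section Basic

variable {p q : ℕ} {Y A : Finset (ℕ × ℕ)}

lemma mem_P {x : ℕ × ℕ} : x ∈ P p q ↔ 1 ≤ x.1 ∧ x.1 ≤ p ∧ p + 1 ≤ x.2 ∧ x.2 ≤ p + q := by
  simp [P, and_assoc]

lemma IsLowerIdeal.mem_of_le (hY : IsLowerIdeal p q Y) {i j i' j' : ℕ} (h : (i, j) ∈ Y)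
    (hi : i ≤ i') (hi' : i' ≤ p) (hj : p + 1 ≤ j') (hj' : j' ≤ j) : (i', j') ∈ Y := by
  have := mem_P.1 (hY.1 h)
  exact hY.2 _ (mem_P.2 ⟨by omega, hi', hj, by omega⟩) _ h ⟨hi, hj'⟩

lemma isLowerIdeal_filter {r : ℕ × ℕ → Prop} [DecidablePred r]
    (h : ∀ x ∈ P p q, ∀ y ∈ P p q, le x y → r y → r x) :
    IsLowerIdeal p q ((P p q).filter r) := by
  refine ⟨filter_subset _ _, fun x hx y hy hxy => mem_filter.2 ⟨hx, ?_⟩⟩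
  rw [mem_filter] at hy
  exact h x hx y hy.1 hxy hy.2

lemma IsAntichainIn.injOn_fst (hA : IsAntichainIn Y A) :
    Set.InjOn Prod.fst (A : Set (ℕ × ℕ)) := by
  intro a ha b hb hab
  by_contra hne
  have := hA.2 a ha b hb hne
  simp only [le] at this
  omega

lemma IsAntichainIn.injOn_snd (hA : IsAntichainIn Y A) :
    Set.InjOn Prod.snd (A : Set (ℕ × ℕ)) := by
  intro a ha b hb hab
  by_contra hne
  have := hA.2 a ha b hb hne
  simp only [le] at this
  omega

lemma IsAntichainIn.image {Y' : Finset (ℕ × ℕ)} {f g : ℕ × ℕ → ℕ × ℕ}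
    (hA : IsAntichainIn Y A) (hf : Set.MapsTo f Y Y') (hgf : Set.LeftInvOn g f Y)
    (hg : ∀ a b, le a b → le (g a) (g b)) :
    IsAntichainIn Y' (A.image f) ∧ #(A.image f) = #A := by
  have hinj : Set.InjOn f A := (hgf.mono hA.1).injOn
  refine ⟨⟨image_subset_iff.2 fun a ha => hf (hA.1 ha), ?_⟩, card_image_of_injOn hinj⟩
  simp only [mem_image]
  rintro _ ⟨a, ha, rfl⟩ _ ⟨b, hb, rfl⟩ hne
  have hab : a ≠ b := fun h => hne (h ▸ rfl)
  have h := hA.2 a ha b hb hab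
  rw [← hgf (hA.1 ha), ← hgf (hA.1 hb)] at h
  exact ⟨fun h' => h.1 (hg _ _ h'), fun h' => h.2 (hg _ _ h')⟩

lemma WidthIs.of_invOn {Y' : Finset (ℕ × ℕ)} {f g : ℕ × ℕ → ℕ × ℕ} {m : ℕ} (h : WidthIs Y m)
    (hf : Set.MapsTo f Y Y') (hg : Set.MapsTo g Y' Y) (hfg : Set.InvOn g f Y Y')
    (hf_le : ∀ a b, le a b → le (f a) (f b)) (hg_le : ∀ a b, le a b → le (g a) (g b)) :
    WidthIs Y' m := by
  obtain ⟨⟨A, hA, rfl⟩, hmax⟩ := h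
  refine ⟨⟨_, hA.image hf hfg.1 hg_le⟩, fun B hB => ?_⟩
  obtain ⟨hB', hcard⟩ := hB.image hg hfg.2 hf_le
  exact hcard ▸ hmax _ hB'

lemma WidthIs.eq {m n : ℕ} (hm : WidthIs Y m) (hn : WidthIs Y n) : m = n := by
  obtain ⟨⟨A, hA, rfl⟩, hmA⟩ := hm
  obtain ⟨⟨B, hB, rfl⟩, hnB⟩ := hn
  exact le_antisymm (hnB A hA) (hmA B hB)

end Basic

section Width

variable {p q : ℕ} {Y A : Finset (ℕ × ℕ)}

def rowLength (p : ℕ) (Y : Finset (ℕ × ℕ)) (i : ℕ) : ℕ :=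
  (Y.filter (·.1 = i)).sup (·.2 - p)

lemma IsLowerIdeal.mem_iff_le_rowLength (hY : IsLowerIdeal p q Y) {i t : ℕ} (ht : 1 ≤ t) :
    (i, p + t) ∈ Y ↔ t ≤ rowLength p Y i := by
  rw [rowLength, Finset.le_sup_iff (by simp only [bot_eq_zero']; omega)]
  constructor
  · intro h
    exact ⟨_, mem_filter.2 ⟨h, rfl⟩, by simp⟩
  · rintro ⟨⟨i', j⟩, hx, htj⟩
    obtain ⟨hxY, rfl⟩ := mem_filter.1 hx
    have := mem_P.1 (hY.1 hxY)
    simp only at this htj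
    exact hY.mem_of_le hxY le_rfl this.2.1 (by omega) (by omega)

def deficiency (p : ℕ) (Y : Finset (ℕ × ℕ)) : ℕ :=
  (Icc 1 p).sup fun k => k - rowLength p Y k

def width (p : ℕ) (Y : Finset (ℕ × ℕ)) : ℕ := p - deficiency p Y

lemma deficiency_le : deficiency p Y ≤ p :=
  Finset.sup_le fun k hk => by simp only [mem_Icc] at hk; omega

lemma sub_rowLength_le_deficiency {k : ℕ} (hk1 : 1 ≤ k) (hkp : k ≤ p) :
    k - rowLength p Y k ≤ deficiency p Y :=
  Finset.le_sup (f := fun k => k - rowLength p Y k) (mem_Icc.2 ⟨hk1, hkp⟩)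

lemma IsAntichainIn.card_filter_lt_fst_le (hY : Y ⊆ P p q) (hA : IsAntichainIn Y A) (k : ℕ) :
    #(A.filter (k < ·.1)) ≤ p - k := by
  calc #(A.filter (k < ·.1)) ≤ #(Icc (k + 1) p) := by
        refine card_le_card_of_injOn Prod.fst (fun a ha => ?_) (hA.injOn_fst.mono ?_)
        · rw [mem_coe, mem_filter] at ha
          have := mem_P.1 (hY (hA.1 ha.1))
          simp only [coe_Icc, Set.mem_Icc]
          omega
        · exact coe_subset.2 (filter_subset _ _)
    _ = p - k := by simp

lemma IsAntichainIn.card_filter_fst_le_le (hY : IsLowerIdeal p q Y) (hA : IsAntichainIn Y A)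
    {k : ℕ} (hkp : k ≤ p) : #(A.filter (·.1 ≤ k)) ≤ rowLength p Y k := by
  calc #(A.filter (·.1 ≤ k)) ≤ #(Icc 1 (rowLength p Y k)) := by
        refine card_le_card_of_injOn (·.2 - p) (fun a ha => ?_) (fun a ha b hb hab => ?_)
        · rw [mem_coe, mem_filter] at ha
          have haY := hA.1 ha.1
          have := mem_P.1 (hY.1 haY)
          have hmem : (k, p + (a.2 - p)) ∈ Y :=
            hY.mem_of_le (i := a.1) haY ha.2 hkp (by omega) (by omega)
          simp only [coe_Icc, Set.mem_Icc]
          exact ⟨by omega, (hY.mem_iff_le_rowLength (by omega)).1 hmem⟩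
        · rw [mem_coe, mem_filter] at ha hb
          have := mem_P.1 (hY.1 (hA.1 ha.1))
          have := mem_P.1 (hY.1 (hA.1 hb.1))
          exact hA.injOn_snd ha.1 hb.1 (by simp only at hab; omega)
    _ = rowLength p Y k := by simp

lemma IsAntichainIn.card_le_rowLength_add (hY : IsLowerIdeal p q Y) (hA : IsAntichainIn Y A)
    {k : ℕ} (hkp : k ≤ p) : #A ≤ rowLength p Y k + (p - k) :=
  calc #A = #(A.filter (·.1 ≤ k)) + #(A.filter (k < ·.1)) := by
        simpa only [not_le] using (card_filter_add_card_filter_not (s := A) (·.1 ≤ k)).symm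
    _ ≤ rowLength p Y k + (p - k) :=
        add_le_add (hA.card_filter_fst_le_le hY hkp) (hA.card_filter_lt_fst_le hY.1 k)

lemma IsLowerIdeal.widthIs_width (hY : IsLowerIdeal p q Y) : WidthIs Y (width p Y) := by
  have hDp : deficiency p Y ≤ p := deficiency_le
  unfold width
  refine ⟨⟨(Icc 1 (p - deficiency p Y)).image fun t => (deficiency p Y + t, p + t), ⟨?_, ?_⟩, ?_⟩,
    fun A hA => ?_⟩
  · simp only [image_subset_iff, mem_Icc]
    rintro t ⟨ht1, ht⟩
    have := sub_rowLength_le_deficiency (p := p) (Y := Y) (k := deficiency p Y + t)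
      (by omega) (by omega)
    exact (hY.mem_iff_le_rowLength ht1).2 (by omega)
  · simp only [mem_image, mem_Icc]
    rintro _ ⟨t, -, rfl⟩ _ ⟨s, -, rfl⟩ hne
    have : t ≠ s := fun h => hne (h ▸ rfl)
    simp only [le]
    omega
  · rw [card_image_of_injOn fun t _ s _ h => by simpa using h]
    simp
  · have hp := hA.card_filter_lt_fst_le hY.1 0
    rw [filter_true_of_mem fun a ha => show 0 < a.1 from (mem_P.1 (hY.1 (hA.1 ha))).1] at hp
    have : deficiency p Y ≤ p - #A := Finset.sup_le fun k hk => by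
      simp only [mem_Icc] at hk
      have := hA.card_le_rowLength_add hY hk.2
      omega
    omega

lemma IsLowerIdeal.widthIs_iff (hY : IsLowerIdeal p q Y) {m : ℕ} :
    WidthIs Y m ↔ width p Y = m :=
  ⟨hY.widthIs_width.eq, fun h => h ▸ hY.widthIs_width⟩

end Width

section Operations

variable {p q : ℕ} {Y : Finset (ℕ × ℕ)}

def reflect (n : ℕ) (x : ℕ × ℕ) : ℕ × ℕ := (n + 1 - x.2, n + 1 - x.1)

def transpose (p q : ℕ) (Y : Finset (ℕ × ℕ)) : Finset (ℕ × ℕ) :=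
  (P q p).filter fun x => reflect (p + q) x ∈ Y

lemma reflect_le_reflect {n : ℕ} {a b : ℕ × ℕ} (h : le a b) : le (reflect n a) (reflect n b) := by
  simp only [le, reflect] at h ⊢
  omega

lemma reflect_reflect {n : ℕ} {x : ℕ × ℕ} (h1 : x.1 ≤ n + 1) (h2 : x.2 ≤ n + 1) :
    reflect n (reflect n x) = x := by
  simp only [reflect]
  ext <;> simp only <;> omega

lemma IsLowerIdeal.transpose (hY : IsLowerIdeal p q Y) : IsLowerIdeal q p (transpose p q Y) := by
  refine isLowerIdeal_filter ?_
  rintro ⟨i, j⟩ hx ⟨i', j'⟩ - hxy hy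
  simp only [mem_P, le, reflect] at hx hxy hy ⊢
  exact hY.mem_of_le hy (by omega) (by omega) (by omega) (by omega)

lemma transpose_transpose (hY : Y ⊆ P p q) : transpose q p (transpose p q Y) = Y := by
  ext ⟨i, j⟩
  simp only [transpose, mem_filter]
  simp only [mem_P, reflect]
  constructor
  · rintro ⟨hx, -, h⟩
    convert h using 2 <;> omega
  · intro h
    have := mem_P.1 (hY h)
    simp only at this
    refine ⟨this, by omega, ?_⟩
    convert h using 2 <;> omega

lemma width_transpose (hY : IsLowerIdeal p q Y) : width q (transpose p q Y) = width p Y := by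
  have hP : ∀ x ∈ P p q, reflect (p + q) (reflect (p + q) x) = x := fun x hx => by
    have := mem_P.1 hx
    exact reflect_reflect (by omega) (by omega)
  refine hY.transpose.widthIs_iff.1 (hY.widthIs_width.of_invOn
    (f := reflect (p + q)) (g := reflect (p + q)) ?_ ?_ ⟨?_, ?_⟩
    (fun _ _ => reflect_le_reflect) (fun _ _ => reflect_le_reflect))
  · intro x hx
    have := mem_P.1 (hY.1 hx)
    refine mem_filter.2 ⟨mem_P.2 ?_, (hP x (hY.1 hx)).symm ▸ hx⟩
    simp only [reflect]
    omega
  · exact fun x hx => (mem_filter.1 hx).2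
  · exact fun x hx => hP x (hY.1 hx)
  · intro x hx
    have := mem_P.1 (mem_filter.1 hx).1
    exact reflect_reflect (by omega) (by omega)

def removeFirstRow (p q : ℕ) (Y : Finset (ℕ × ℕ)) : Finset (ℕ × ℕ) :=
  (P p q).filter fun x => (x.1 + 1, x.2 + 1) ∈ Y

def addEmptyRow (p q : ℕ) (Y : Finset (ℕ × ℕ)) : Finset (ℕ × ℕ) :=
  (P (p + 1) q).filter fun x => (x.1 - 1, x.2 - 1) ∈ Y

lemma IsLowerIdeal.removeFirstRow (hY : IsLowerIdeal (p + 1) q Y) :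
    IsLowerIdeal p q (removeFirstRow p q Y) := by
  refine isLowerIdeal_filter ?_
  rintro ⟨i, j⟩ hx ⟨i', j'⟩ - hxy hy
  simp only [mem_P, le] at hx hxy hy ⊢
  exact hY.mem_of_le hy (by omega) (by omega) (by omega) (by omega)

lemma IsLowerIdeal.addEmptyRow (hY : IsLowerIdeal p q Y) :
    IsLowerIdeal (p + 1) q (addEmptyRow p q Y) := by
  refine isLowerIdeal_filter ?_
  rintro ⟨i, j⟩ hx ⟨i', j'⟩ hy' hxy hy
  have := mem_P.1 (hY.1 hy)
  simp only [mem_P, le] at hx hy' hxy this ⊢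
  exact hY.mem_of_le hy (by omega) (by omega) (by omega) (by omega)

lemma notMem_addEmptyRow (hY : Y ⊆ P p q) : (1, p + 1 + 1) ∉ addEmptyRow p q Y := fun h =>
  by simpa [mem_P] using hY (mem_filter.1 h).2

lemma removeFirstRow_addEmptyRow (hY : Y ⊆ P p q) :
    removeFirstRow p q (addEmptyRow p q Y) = Y := by
  ext ⟨i, j⟩
  simp only [removeFirstRow, addEmptyRow, mem_filter, mem_P, Nat.add_sub_cancel]
  constructor
  · exact fun h => h.2.2
  · intro h
    have := mem_P.1 (hY h)
    simp only at this
    exact ⟨this, by omega, h⟩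

lemma addEmptyRow_removeFirstRow (hY : IsLowerIdeal (p + 1) q Y) (h : (1, p + 1 + 1) ∉ Y) :
    addEmptyRow p q (removeFirstRow p q Y) = Y := by
  ext ⟨i, j⟩
  simp only [removeFirstRow, addEmptyRow, mem_filter, mem_P]
  constructor
  · rintro ⟨hP, -, hx⟩
    convert hx using 2 <;> omega
  · intro hx
    have := mem_P.1 (hY.1 hx)
    simp only at this
    have hi : i ≠ 1 := by
      rintro rfl
      exact h (hY.mem_of_le hx le_rfl (by omega) le_rfl (by omega))
    refine ⟨this, by omega, ?_⟩
    convert hx using 2 <;> omega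

lemma width_addEmptyRow (hY : IsLowerIdeal p q Y) :
    width (p + 1) (addEmptyRow p q Y) = width p Y := by
  refine hY.addEmptyRow.widthIs_iff.1 (hY.widthIs_width.of_invOn
    (f := fun x => (x.1 + 1, x.2 + 1)) (g := fun x => (x.1 - 1, x.2 - 1)) ?_ ?_ ⟨?_, ?_⟩ ?_ ?_)
  · intro x hx
    have := mem_P.1 (hY.1 hx)
    exact mem_filter.2 ⟨mem_P.2 (by simp only; omega), by simpa using hx⟩
  · exact fun x hx => (mem_filter.1 hx).2
  · exact fun x _ => by simp
  · intro x hx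
    have := mem_P.1 (hY.1 (mem_filter.1 hx).2)
    ext <;> simp only <;> omega
  · intro a b h
    simp only [le] at h ⊢
    omega
  · intro a b h
    simp only [le] at h ⊢
    omega

def addColumn (p q : ℕ) (Y : Finset (ℕ × ℕ)) : Finset (ℕ × ℕ) :=
  (P p (q + 1)).filter fun x => x.2 = p + 1 ∨ (x.1, x.2 - 1) ∈ Y

def removeColumn (p q : ℕ) (Y : Finset (ℕ × ℕ)) : Finset (ℕ × ℕ) :=
  (P p q).filter fun x => (x.1, x.2 + 1) ∈ Y

lemma IsLowerIdeal.addColumn (hY : IsLowerIdeal p q Y) :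
    IsLowerIdeal p (q + 1) (addColumn p q Y) := by
  refine isLowerIdeal_filter ?_
  rintro ⟨i, j⟩ hx ⟨i', j'⟩ - hxy (hy | hy)
  all_goals simp only [mem_P, le] at hx hxy hy ⊢
  · omega
  · by_cases hj : j = p + 1
    · exact Or.inl hj
    · exact Or.inr (hY.mem_of_le hy (by omega) (by omega) (by omega) (by omega))

lemma IsLowerIdeal.removeColumn (hY : IsLowerIdeal p (q + 1) Y) :
    IsLowerIdeal p q (removeColumn p q Y) := by
  refine isLowerIdeal_filter ?_
  rintro ⟨i, j⟩ hx ⟨i', j'⟩ - hxy hy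
  simp only [mem_P, le] at hx hxy hy ⊢
  exact hY.mem_of_le hy (by omega) (by omega) (by omega) (by omega)

lemma mem_addColumn (hp : 1 ≤ p) : (1, p + 1) ∈ addColumn p q Y :=
  mem_filter.2 ⟨mem_P.2 (by simp only; omega), Or.inl rfl⟩

lemma removeColumn_addColumn (hY : Y ⊆ P p q) : removeColumn p q (addColumn p q Y) = Y := by
  ext ⟨i, j⟩
  simp only [removeColumn, addColumn, mem_filter, mem_P, Nat.add_sub_cancel]
  constructor
  · rintro ⟨hx, -, hj | h⟩
    · omega
    · exact h
  · intro h
    have := mem_P.1 (hY h)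
    simp only at this
    exact ⟨this, by omega, Or.inr h⟩

lemma addColumn_removeColumn (hY : IsLowerIdeal p (q + 1) Y) (h : (1, p + 1) ∈ Y) :
    addColumn p q (removeColumn p q Y) = Y := by
  ext ⟨i, j⟩
  simp only [removeColumn, addColumn, mem_filter, mem_P]
  constructor
  · rintro ⟨hx, rfl | ⟨-, hy⟩⟩
    · exact hY.mem_of_le h (by omega) (by omega) le_rfl le_rfl
    · convert hy using 2
      omega
  · intro hx
    have := mem_P.1 (hY.1 hx)
    simp only at this
    refine ⟨this, ?_⟩
    by_cases hj : j = p + 1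
    · exact Or.inl hj
    · refine Or.inr ⟨by omega, ?_⟩
      convert hx using 2
      omega

lemma rowLength_addColumn (hY : IsLowerIdeal p q Y) {k : ℕ} (hk1 : 1 ≤ k) (hkp : k ≤ p) :
    rowLength p (addColumn p q Y) k = rowLength p Y k + 1 := by
  refine eq_of_forall_le_iff fun t => ?_
  rcases Nat.lt_or_ge t 1 with ht | ht
  · omega
  rw [← hY.addColumn.mem_iff_le_rowLength ht]
  simp only [addColumn, mem_filter, mem_P]
  rcases Nat.lt_or_ge t 2 with ht2 | ht2
  · have : t = 1 := by omega
    subst this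
    simp only [true_or, and_true]
    omega
  · obtain ⟨s, rfl⟩ : ∃ s, t = s + 1 := ⟨t - 1, by omega⟩
    rw [show p + (s + 1) - 1 = p + s by omega, hY.mem_iff_le_rowLength (by omega)]
    constructor
    · rintro ⟨-, h | h⟩ <;> omega
    · intro h
      have := (hY.mem_iff_le_rowLength (i := k) (t := s) (by omega)).2 (by omega)
      have := mem_P.1 (hY.1 this)
      simp only at this
      omega

lemma width_addColumn (hY : IsLowerIdeal p q Y) :
    width p (addColumn p q Y) = min p (width p Y + 1) := by
  have hdef : deficiency p (addColumn p q Y) = deficiency p Y - 1 := by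
    rw [deficiency, deficiency, apply_sup_eq_sup_comp_of_linearOrder (· - 1)
      (fun _ _ h => Nat.sub_le_sub_right h 1) rfl]
    refine sup_congr rfl fun k hk => ?_
    rw [mem_Icc] at hk
    simp only [Function.comp_apply, rowLength_addColumn hY hk.1 hk.2]
    omega
  have := deficiency_le (p := p) (Y := Y)
  simp only [width, hdef]
  omega

end Operations

section Counting

variable {p q m : ℕ} {Y : Finset (ℕ × ℕ)}

lemma IsLowerIdeal.mem_of_width_eq (hY : IsLowerIdeal p q Y) (hp : 1 ≤ p)
    (h : width p Y = p) : (1, p + 1) ∈ Y := by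
  have := sub_rowLength_le_deficiency (p := p) (Y := Y) le_rfl hp
  have := deficiency_le (p := p) (Y := Y)
  exact (hY.mem_iff_le_rowLength le_rfl).2 (by simp only [width] at h; omega)

open scoped Classical in
noncomputable def ideals (p q : ℕ) : Finset (Finset (ℕ × ℕ)) :=
  (P p q).powerset.filter (IsLowerIdeal p q)

lemma mem_ideals : Y ∈ ideals p q ↔ IsLowerIdeal p q Y := by
  simp only [ideals, mem_filter, mem_powerset, and_iff_right_iff_imp]
  exact fun h => h.1

lemma w_eq_card (p q m : ℕ) : w p q m = #{Y ∈ ideals p q | width p Y = m} := by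
  rw [w, ← Nat.card_eq_finsetCard]
  refine Nat.card_congr (Equiv.subtypeEquivRight fun Y => ?_)
  rw [mem_filter, mem_ideals]
  exact ⟨fun h => ⟨h.1, h.1.widthIs_iff.1 h.2⟩, fun h => ⟨h.1, h.1.widthIs_iff.2 h.2⟩⟩

lemma w_comm (p q m : ℕ) : w p q m = w q p m := by
  have maps : ∀ p q, Set.MapsTo (transpose p q)
      ((ideals p q).filter (width p · = m) : Set (Finset (ℕ × ℕ)))
      ((ideals q p).filter (width q · = m) : Set (Finset (ℕ × ℕ))) := by
    intro p q Y hY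
    simp only [mem_coe, mem_filter, mem_ideals] at hY ⊢
    exact ⟨hY.1.transpose, (width_transpose hY.1).trans hY.2⟩
  have inv : ∀ p q, Set.LeftInvOn (transpose q p) (transpose p q)
      ((ideals p q).filter (width p · = m) : Set (Finset (ℕ × ℕ))) := by
    intro p q Y hY
    simp only [mem_coe, mem_filter, mem_ideals] at hY
    exact transpose_transpose hY.1.1
  rw [w_eq_card, w_eq_card]
  exact card_nbij' _ _ (maps p q) (maps q p) (inv p q) (inv q p)

lemma card_filter_width_eq_add (x : ℕ × ℕ) : #{Y ∈ ideals p q | width p Y = m} =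
    #{Y ∈ ideals p q | x ∉ Y ∧ width p Y = m} + #{Y ∈ ideals p q | x ∈ Y ∧ width p Y = m} := by
  rw [← card_filter_add_card_filter_not (s := {Y ∈ ideals p q | width p Y = m}) (x ∉ ·)]
  simp only [filter_filter, not_not, and_comm]

lemma card_filter_notMem_eq_w (p q m : ℕ) :
    #{Y ∈ ideals (p + 1) q | (1, p + 1 + 1) ∉ Y ∧ width (p + 1) Y = m} = w p q m := by
  rw [w_eq_card]
  refine card_nbij' (removeFirstRow p q) (addEmptyRow p q) ?_ ?_ ?_ ?_ <;> intro Y hY <;>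
    simp only [mem_coe, mem_filter, mem_ideals] at hY ⊢
  · obtain ⟨hY, hx, rfl⟩ := hY
    refine ⟨hY.removeFirstRow, ?_⟩
    rw [← width_addEmptyRow hY.removeFirstRow, addEmptyRow_removeFirstRow hY hx]
  · exact ⟨hY.1.addEmptyRow, notMem_addEmptyRow hY.1.1, (width_addEmptyRow hY.1).trans hY.2⟩
  · exact addEmptyRow_removeFirstRow hY.1 hY.2.1
  · exact removeFirstRow_addEmptyRow hY.1.1

lemma card_filter_mem_eq (hp : 1 ≤ p) (q m : ℕ) :
    #{Y ∈ ideals p (q + 1) | (1, p + 1) ∈ Y ∧ width p Y = m} =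
      #{Y ∈ ideals p q | min p (width p Y + 1) = m} := by
  refine card_nbij' (removeColumn p q) (addColumn p q) ?_ ?_ ?_ ?_ <;> intro Y hY <;>
    simp only [mem_coe, mem_filter, mem_ideals] at hY ⊢
  · obtain ⟨hY, hx, rfl⟩ := hY
    refine ⟨hY.removeColumn, ?_⟩
    rw [← width_addColumn hY.removeColumn, addColumn_removeColumn hY hx]
  · exact ⟨hY.1.addColumn, mem_addColumn hp, (width_addColumn hY.1).trans hY.2⟩
  · exact addColumn_removeColumn hY.1 hY.2.1
  · exact removeColumn_addColumn hY.1.1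

lemma w_succ_succ (hm : m < p + 1) :
    w (p + 1) (q + 1) m = w p (q + 1) m + if m = 0 then 0 else w (p + 1) q (m - 1) := by
  rw [w_eq_card, card_filter_width_eq_add (1, p + 1 + 1), card_filter_notMem_eq_w,
    card_filter_mem_eq (Nat.le_add_left 1 p)]
  congr 1
  split_ifs with hm0
  · exact card_eq_zero.2 (filter_eq_empty_iff.2 fun Y _ => by omega)
  · rw [w_eq_card]
    congr 1
    exact filter_congr fun Y _ => by omega

lemma w_full_width_succ (hp : 1 ≤ p) : w p (q + 1) p = w p q p + w p q (p - 1) := by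
  have hfull : #{Y ∈ ideals p (q + 1) | (1, p + 1) ∉ Y ∧ width p Y = p} = 0 :=
    card_eq_zero.2 <| filter_eq_empty_iff.2 fun Y hY h =>
      h.1 ((mem_ideals.1 hY).mem_of_width_eq hp h.2)
  have hsplit : #{Y ∈ ideals p q | min p (width p Y + 1) = p} =
      #({Y ∈ ideals p q | width p Y = p} ∪ {Y ∈ ideals p q | width p Y = p - 1}) := by
    rw [← filter_or]
    refine congrArg card (filter_congr fun Y _ => ?_)
    have : width p Y ≤ p := Nat.sub_le _ _
    omega
  rw [w_eq_card, card_filter_width_eq_add (1, p + 1), hfull, zero_add, card_filter_mem_eq hp,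
    hsplit, card_union_of_disjoint (disjoint_filter.2 fun _ _ h => by omega), w_eq_card,
    w_eq_card]

end Counting

/-- `w_{p,q}` is symmetric in `p, q` and for `p ≤ q` satisfies the recursion
`w_{p,q}(m) = w_{p−1,q}(m) + w_{p,q−1}(m−1)` for `m < p` (with
`w_{p,q-1}(−1) = 0`) and `w_{p,q}(p) = w_{p,q−1}(p) + w_{p,q−1}(p−1)`. -/
theorem w_recursion :
    (∀ p q m : ℕ, w p q m = w q p m) ∧
    (∀ p q m : ℕ, p ≤ q → m < p →
      w p q m = w (p - 1) q m + (if m = 0 then 0 else w p (q - 1) (m - 1))) ∧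
    (∀ p q : ℕ, 1 ≤ p → p ≤ q →
      w p q p = w p (q - 1) p + w p (q - 1) (p - 1)) := by
  refine ⟨w_comm, fun p q m hpq hm => ?_, fun p q hp hpq => ?_⟩
  · obtain ⟨p, rfl⟩ : ∃ p', p = p' + 1 := ⟨p - 1, by omega⟩
    obtain ⟨q, rfl⟩ : ∃ q', q = q' + 1 := ⟨q - 1, by omega⟩
    exact w_succ_succ hm
  · obtain ⟨q, rfl⟩ : ∃ q', q = q' + 1 := ⟨q - 1, by omega⟩
    exact w_full_width_succ hp

end Stmt7
end

section
/- Let x = (x₁,…,x_N) be a sequence of reals in which the longest weakly increasing subsequence has length at most 2 (equivalently, the Robinson–Schensted tableau of x has at most two columns). If x = (t₁,…,t_n, s₁,…,s_m) with t₁ > ⋯ > t_n, s₁ > ⋯ > s_m, all t_i − t_j ∈ ℤ, all s_i − s_j ∈ ℤ, and t_n ≤ s₁, then the number of entries in the second column of the Robinson–Schensted tableau of x equals the largest integer k such that t_{n−k+1} ≤ s₁, t_{n−k+2} ≤ s₂, …, t_n ≤ s_k. -/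
namespace Stmt9

/-- The length of the longest strictly decreasing subsequence of `x`.
By Greene's theorem this is the length of the first column of the
Robinson–Schensted tableau of `x`. -/
noncomputable def maxDecr (N : ℕ) (x : Fin N → ℝ) : ℕ :=
  sSup {k : ℕ | ∃ f : Fin k → Fin N, StrictMono f ∧ StrictAnti (x ∘ f)}

/-- The number of entries in the second column of the Robinson–Schensted
tableau of a sequence `x` of length `N` with at most two columns is
`N − maxDecr x`. -/
noncomputable def secondColumn (N : ℕ) (x : Fin N → ℝ) : ℕ := N - maxDecr N x

private lemma fin_mk_congr {n : ℕ} {i j : ℕ} (hi : i < n) (hj : j < n) (h : i = j) :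
    (⟨i, hi⟩ : Fin n) = ⟨j, hj⟩ := by subst h; rfl

private lemma fin_val_congr {k N : ℕ} (f : Fin k → Fin N) {i j : ℕ} (hi : i < k) (hj : j < k)
    (h : i = j) : (f ⟨i, hi⟩ : ℕ) = (f ⟨j, hj⟩ : ℕ) := by subst h; rfl

/-- Auxiliary construction: a strictly decreasing subsequence consisting of a
prefix of `t` of length `a` followed by a suffix of `s` starting at `j`. -/
private lemma construct_aux {n m : ℕ} (hn : 0 < n) (t : Fin n → ℝ) (s : Fin m → ℝ)
    (ht : StrictAnti t) (hs : StrictAnti s)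
    (x : Fin (n + m) → ℝ)
    (hxlp : ∀ (p : Fin (n + m)) (h : (p : ℕ) < n), x p = t ⟨(p : ℕ), h⟩)
    (hxrp : ∀ (p : Fin (n + m)) (h : n ≤ (p : ℕ)),
      x p = s ⟨(p : ℕ) - n, by have := p.isLt; omega⟩)
    (a j : ℕ) (ha : a ≤ n) (hj : j ≤ m)
    (hcross : ∀ (_ : 0 < a) (h2 : j < m), s ⟨j, h2⟩ < t ⟨a - 1, by omega⟩) :
    ∃ f : Fin (a + (m - j)) → Fin (n + m), StrictMono f ∧ StrictAnti (x ∘ f) := by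
  have F : ∃ f : Fin (a + (m - j)) → Fin (n + m), ∀ r : Fin (a + (m - j)),
      (f r : ℕ) = if (r : ℕ) < a then (r : ℕ) else n + (j + ((r : ℕ) - a)) :=
    ⟨fun r => ⟨if (r : ℕ) < a then (r : ℕ) else n + (j + ((r : ℕ) - a)),
      by have := r.isLt; split <;> omega⟩, fun r => rfl⟩
  obtain ⟨f, hfval⟩ := F
  refine ⟨f, ?_, ?_⟩
  · intro r1 r2 h12
    have h12' : (r1 : ℕ) < (r2 : ℕ) := h12
    have hr2 := r2.isLt
    rw [Fin.lt_def]
    have hv1 := hfval r1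
    have hv2 := hfval r2
    split_ifs at hv1 hv2 <;> omega
  · intro r1 r2 h12
    have h12' : (r1 : ℕ) < (r2 : ℕ) := h12
    have hr1 := r1.isLt
    have hr2 := r2.isLt
    have hv1 := hfval r1
    have hv2 := hfval r2
    rcases Nat.lt_or_ge (r1 : ℕ) a with h2 | h2
    · rcases Nat.lt_or_ge (r2 : ℕ) a with h1 | h1
      · -- both in the t-part
        rw [if_pos h1] at hv2
        rw [if_pos h2] at hv1
        have hfr1n : (f r1 : ℕ) < n := by omega
        have hfr2n : (f r2 : ℕ) < n := by omega
        have e1 : (x ∘ f) r1 = t ⟨(f r1 : ℕ), hfr1n⟩ := hxlp (f r1) hfr1n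
        have e2 : (x ∘ f) r2 = t ⟨(f r2 : ℕ), hfr2n⟩ := hxlp (f r2) hfr2n
        rw [e1, e2]
        exact ht (Fin.mk_lt_mk.mpr (by omega))
      · -- r1 in t-part, r2 in s-part
        rw [if_neg (by omega)] at hv2
        rw [if_pos h2] at hv1
        have hjm : j < m := by omega
        have hfr1n : (f r1 : ℕ) < n := by omega
        have hfr2m : (f r2 : ℕ) - n < m := by omega
        have hfr2ge : n ≤ (f r2 : ℕ) := by omega
        have e1 : (x ∘ f) r1 = t ⟨(f r1 : ℕ), hfr1n⟩ := hxlp (f r1) hfr1n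
        have e2 : (x ∘ f) r2 = s ⟨(f r2 : ℕ) - n, hfr2m⟩ := hxrp (f r2) hfr2ge
        rw [e1, e2]
        calc s ⟨(f r2 : ℕ) - n, hfr2m⟩
            ≤ s ⟨j, hjm⟩ := hs.antitone (Fin.mk_le_mk.mpr (by omega))
          _ < t ⟨a - 1, by omega⟩ := hcross (by omega) hjm
          _ ≤ t ⟨(f r1 : ℕ), hfr1n⟩ := ht.antitone (Fin.mk_le_mk.mpr (by omega))
    · -- both in the s-part (r2 > r1 ≥ a)
      rw [if_neg (by omega)] at hv1
      rw [if_neg (by omega)] at hv2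
      have hfr1m : (f r1 : ℕ) - n < m := by omega
      have hfr2m : (f r2 : ℕ) - n < m := by omega
      have e1 : (x ∘ f) r1 = s ⟨(f r1 : ℕ) - n, hfr1m⟩ := hxrp (f r1) (by omega)
      have e2 : (x ∘ f) r2 = s ⟨(f r2 : ℕ) - n, hfr2m⟩ := hxrp (f r2) (by omega)
      rw [e1, e2]
      exact hs (Fin.mk_lt_mk.mpr (by omega))

/-- For an `(n,m)`-dominant sequence `x = (t₁,…,t_n,s₁,…,s_m)` whose RS tableau
has at most two columns (longest weakly increasing subsequence ≤ 2), with
`t_n ≤ s₁`, the second-column length equals the largest `k` with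
`t_{n−k+1} ≤ s₁, …, t_n ≤ s_k`. -/
theorem second_column_eq (n m : ℕ) (hn : 0 < n) (hm : 0 < m)
    (t : Fin n → ℝ) (s : Fin m → ℝ)
    (ht : StrictAnti t) (hs : StrictAnti s)
    (htz : ∀ i j, ∃ z : ℤ, t i - t j = (z : ℝ))
    (hsz : ∀ i j, ∃ z : ℤ, s i - s j = (z : ℝ))
    (hts : t ⟨n - 1, by omega⟩ ≤ s ⟨0, hm⟩)
    (h2col : ∀ (k : ℕ) (f : Fin k → Fin (n + m)),
      StrictMono f → Monotone (Fin.append t s ∘ f) → k ≤ 2) :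
    secondColumn (n + m) (Fin.append t s) =
      sSup {k : ℕ | ∃ _h1 : k ≤ n, ∃ _h2 : k ≤ m, ∀ r : Fin k,
        t ⟨n - k + (r : ℕ), by have := r.isLt; omega⟩ ≤
          s ⟨(r : ℕ), by have := r.isLt; omega⟩} := by
  classical
  set x : Fin (n + m) → ℝ := Fin.append t s with hxdef
  -- evaluation lemmas for x
  have hxlp : ∀ (p : Fin (n + m)) (h : (p : ℕ) < n), x p = t ⟨(p : ℕ), h⟩ := by
    intro p h
    have hp : p = Fin.castAdd m ⟨(p : ℕ), h⟩ := Fin.ext rfl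
    conv_lhs => rw [hxdef, hp]
    exact Fin.append_left t s ⟨(p : ℕ), h⟩
  have hxrp : ∀ (p : Fin (n + m)) (h : n ≤ (p : ℕ)),
      x p = s ⟨(p : ℕ) - n, by have := p.isLt; omega⟩ := by
    intro p h
    have hp : p = Fin.natAdd n ⟨(p : ℕ) - n, by have := p.isLt; omega⟩ :=
      Fin.ext (show (p : ℕ) = n + ((p : ℕ) - n) by omega)
    conv_lhs => rw [hxdef, hp]
    exact Fin.append_right t s ⟨(p : ℕ) - n, by have := p.isLt; omega⟩
  set S : Set ℕ := {k : ℕ | ∃ _h1 : k ≤ n, ∃ _h2 : k ≤ m, ∀ r : Fin k,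
      t ⟨n - k + (r : ℕ), by have := r.isLt; omega⟩ ≤
        s ⟨(r : ℕ), by have := r.isLt; omega⟩} with hSdef
  have hS0 : 0 ∈ S := by
    rw [hSdef]
    exact ⟨Nat.zero_le n, Nat.zero_le m, fun r => r.elim0⟩
  have hSbdd : BddAbove S := by
    rw [hSdef]
    exact ⟨n, fun k hk => hk.choose⟩
  set K : ℕ := sSup S with hKdef
  have hKmem : K ∈ S := Nat.sSup_mem ⟨0, hS0⟩ hSbdd
  rw [hSdef] at hKmem
  obtain ⟨hKn, hKm, hKP⟩ := hKmem
  -- Part A: construction of a decreasing subsequence of length n + m - K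
  have hA : ∃ f : Fin (n + m - K) → Fin (n + m), StrictMono f ∧ StrictAnti (x ∘ f) := by
    rcases Nat.lt_or_ge K m with hKm' | hKm'
    · rcases Nat.lt_or_ge K n with hKn' | hKn'
      · -- K < n and K < m : the condition fails at K + 1
        have hfail : ∃ r : Fin (K + 1),
            s ⟨(r : ℕ), by have := r.isLt; omega⟩ <
              t ⟨n - (K + 1) + (r : ℕ), by have := r.isLt; omega⟩ := by
          by_contra hcnot
          push_neg at hcnot
          have hmem : (K + 1) ∈ S := by
            rw [hSdef]
            exact ⟨by omega, by omega, fun r => hcnot r⟩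
          have := le_csSup hSbdd hmem
          omega
        obtain ⟨r, hr⟩ := hfail
        have hrK : (r : ℕ) ≤ K := by have := r.isLt; omega
        rw [show n + m - K = (n - K + (r : ℕ)) + (m - (r : ℕ)) from by omega]
        refine construct_aux hn t s ht hs x hxlp hxrp (n - K + (r : ℕ)) (r : ℕ)
          (by omega) (by omega) ?_
        intro h1 h2
        have he : (⟨n - K + (r : ℕ) - 1, by omega⟩ : Fin n) =
            ⟨n - (K + 1) + (r : ℕ), by have := r.isLt; omega⟩ :=
          fin_mk_congr _ _ (by omega)
        rw [he]
        exact hr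
      · -- K = n : take whole of s
        rw [show n + m - K = 0 + (m - 0) from by omega]
        exact construct_aux hn t s ht hs x hxlp hxrp 0 0 (Nat.zero_le n) (Nat.zero_le m)
          (fun h1 _ => absurd h1 (lt_irrefl 0))
    · -- K = m : take whole of t
      rw [show n + m - K = n + (m - m) from by omega]
      exact construct_aux hn t s ht hs x hxlp hxrp n m le_rfl le_rfl
        (fun _ h2 => absurd h2 (lt_irrefl m))
  -- Part B: every decreasing subsequence has length at most n + m - K
  have hB : ∀ (k : ℕ) (f : Fin k → Fin (n + m)),
      StrictMono f → StrictAnti (x ∘ f) → k ≤ n + m - K := by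
    intro k f hf hanti
    by_contra hcon
    push_neg at hcon
    have hk0 : 0 < k := by omega
    have hkm1 : k - 1 < k := by omega
    have gap : ∀ (i d : ℕ) (h : i + d < k),
        (f ⟨i, by omega⟩ : ℕ) + d ≤ (f ⟨i + d, h⟩ : ℕ) := by
      intro i d
      induction d with
      | zero => intro h; exact Nat.le_refl _
      | succ d ih =>
        intro h
        have h' : i + d < k := by omega
        have hkk : i + d + 1 < k := h
        have ih' := ih h'
        have hlt : (f ⟨i + d, h'⟩ : ℕ) < (f ⟨i + d + 1, hkk⟩ : ℕ) :=
          Fin.lt_def.mp (hf (Fin.mk_lt_mk.mpr (Nat.lt_succ_self _)))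
        have he : (f ⟨i + (d + 1), h⟩ : ℕ) = (f ⟨i + d + 1, hkk⟩ : ℕ) := rfl
        omega
    have hok : 0 + (k - 1) < k := by omega
    have hg1 := gap 0 (k - 1) hok
    have he1 : (f ⟨0 + (k - 1), hok⟩ : ℕ) = (f ⟨k - 1, hkm1⟩ : ℕ) :=
      fin_val_congr f hok hkm1 (Nat.zero_add _)
    have hfub : (f ⟨k - 1, hkm1⟩ : ℕ) < n + m := (f _).isLt
    by_cases hc1 : (f ⟨k - 1, hkm1⟩ : ℕ) < n
    · omega
    · by_cases hc0 : (f ⟨0, hk0⟩ : ℕ) < n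
      · -- the subsequence crosses from t to s
        have hP : ∀ h : k - 1 < k, n ≤ (f ⟨k - 1, h⟩ : ℕ) := fun _ => Nat.le_of_not_lt hc1
        have hPex : ∃ i, ∀ h : i < k, n ≤ (f ⟨i, h⟩ : ℕ) := ⟨k - 1, hP⟩
        set a := Nat.find hPex with hadef
        have hspec := Nat.find_spec hPex
        have halek : a ≤ k - 1 := Nat.find_le hP
        have hak : a < k := by omega
        have hfa : n ≤ (f ⟨a, hak⟩ : ℕ) := hspec hak
        have ha0 : 0 < a := by
          by_contra h0
          have ha0' : a = 0 := by omega
          have heq : (f ⟨a, hak⟩ : ℕ) = (f ⟨0, hk0⟩ : ℕ) :=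
            fin_val_congr f hak hk0 ha0'
          omega
        have ham1 : a - 1 < k := by omega
        have hmin := Nat.find_min hPex (m := a - 1) (by omega)
        have hfam1 : (f ⟨a - 1, ham1⟩ : ℕ) < n := by
          by_contra hge
          exact hmin (fun h => Nat.le_of_not_lt hge)
        clear hmin
        have hom1 : 0 + (a - 1) < k := by omega
        have hg2 := gap 0 (a - 1) hom1
        have he2 : (f ⟨0 + (a - 1), hom1⟩ : ℕ) = (f ⟨a - 1, ham1⟩ : ℕ) :=
          fin_val_congr f hom1 ham1 (Nat.zero_add _)
        have hom2 : a + (k - 1 - a) < k := by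
          rw [show a + (k - 1 - a) = k - 1 from by omega]; exact hkm1
        have hg3 := gap a (k - 1 - a) hom2
        have he3 : (f ⟨a + (k - 1 - a), hom2⟩ : ℕ) = (f ⟨k - 1, hkm1⟩ : ℕ) :=
          fin_val_congr f hom2 hkm1 (by omega)
        have hfaub : (f ⟨a, hak⟩ : ℕ) < n + m := (f _).isLt
        have hjm : (f ⟨a, hak⟩ : ℕ) - n < m := by omega
        have hlt : x (f ⟨a, hak⟩) < x (f ⟨a - 1, ham1⟩) :=
          hanti (Fin.mk_lt_mk.mpr (by omega))
        have e1 : x (f ⟨a - 1, ham1⟩) = t ⟨(f ⟨a - 1, ham1⟩ : ℕ), hfam1⟩ :=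
          hxlp _ hfam1
        have e2 : x (f ⟨a, hak⟩) = s ⟨(f ⟨a, hak⟩ : ℕ) - n, hjm⟩ :=
          hxrp _ hfa
        rw [e1, e2] at hlt
        have han : a ≤ n := by omega
        have hb1 : 1 ≤ k - a := by omega
        have hmbm : m - (k - a) < m := by omega
        have hmbK : m - (k - a) < K := by omega
        have hnk : n - K + (m - (k - a)) < n := by omega
        have ham1n : a - 1 < n := by omega
        have hchain : s ⟨m - (k - a), hmbm⟩ < s ⟨m - (k - a), hmbm⟩ := by
          calc s ⟨m - (k - a), hmbm⟩
              ≤ s ⟨(f ⟨a, hak⟩ : ℕ) - n, hjm⟩ := hs.antitone (Fin.mk_le_mk.mpr (by omega))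
            _ < t ⟨(f ⟨a - 1, ham1⟩ : ℕ), hfam1⟩ := hlt
            _ ≤ t ⟨a - 1, ham1n⟩ := ht.antitone (Fin.mk_le_mk.mpr (by omega))
            _ ≤ t ⟨n - K + (m - (k - a)), hnk⟩ := ht.antitone (Fin.mk_le_mk.mpr (by omega))
            _ ≤ s ⟨m - (k - a), hmbm⟩ := hKP ⟨m - (k - a), hmbK⟩
        exact absurd hchain (lt_irrefl _)
      · -- entire subsequence inside s
        omega
  have hDbdd : BddAbove {k : ℕ | ∃ f : Fin k → Fin (n + m), StrictMono f ∧ StrictAnti (x ∘ f)} := by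
    refine ⟨n + m, ?_⟩
    rintro k ⟨f, hf, -⟩
    simpa using Fintype.card_le_of_injective f hf.injective
  have hmd : maxDecr (n + m) x = n + m - K := by
    unfold maxDecr
    apply le_antisymm
    · refine csSup_le ⟨0, ⟨Fin.elim0, fun a => a.elim0, fun a => a.elim0⟩⟩ ?_
      rintro k ⟨f, hf, hanti⟩
      exact hB k f hf hanti
    · exact le_csSup hDbdd hA
  have hfin : secondColumn (n + m) x = K := by
    unfold secondColumn
    rw [hmd]
    omega
  rw [hKdef, hSdef] at hfin
  exact hfin

end Stmt9
end

section
/- Let t₁ > t₂ > ⋯ > t_n be strictly decreasing reals with pairwise integer differences, and consider the sequence λ⁻ = (t₁,…,t_n, −t_n,…,−t₁). Assume t_n ≤ −t_n (i.e., t_n ≤ 0). Then the number of entries in the second column of the Robinson–Schensted tableau of λ⁻ equals the largest integer t such that t_{n−t+1} ≤ −t_n, t_{n−t+2} ≤ −t_{n−1}, …, t_n ≤ −t_{n−t+1}; equivalently, the largest t such that t_{n−t+r} + t_{n−r+1} ≤ 0 for all r = 1,…,t. -/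
namespace Stmt11

/-- The length of the longest strictly decreasing subsequence of `x`
(= first column length of the Robinson–Schensted tableau). -/
noncomputable def maxDecr (N : ℕ) (x : Fin N → ℝ) : ℕ :=
  sSup {k : ℕ | ∃ f : Fin k → Fin N, StrictMono f ∧ StrictAnti (x ∘ f)}

/-- Second-column length of the RS tableau of a sequence with ≤ 2 columns. -/
noncomputable def secondColumn (N : ℕ) (x : Fin N → ℝ) : ℕ := N - maxDecr N x

lemma maxDecr_aux (n K : ℕ) (hn : 0 < n) (hKn : K ≤ n) (T : ℕ → ℝ)
    (hanti : ∀ a b : ℕ, a ≤ b → T b ≤ T a)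
    (hstrict : ∀ a b : ℕ, a < b → b < n → T b < T a)
    (hK : ∀ r : ℕ, r < K → T (n - K + r) + T (n - 1 - r) ≤ 0)
    (hK1 : K < n → ∃ r ≤ K, 0 < T (n - K - 1 + r) + T (n - 1 - r))
    (x : Fin (n + n) → ℝ)
    (hxl : ∀ (m : ℕ) (h : m < n + n), m < n → x ⟨m, h⟩ = T m)
    (hxr : ∀ (m : ℕ) (h : m < n + n), n ≤ m → x ⟨m, h⟩ = - T (2 * n - 1 - m)) :
    maxDecr (n + n) x = n + n - K := by
  have hDb : ∀ k ∈ {k : ℕ | ∃ f : Fin k → Fin (n + n), StrictMono f ∧ StrictAnti (x ∘ f)},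
      k ≤ n + n := by
    rintro k ⟨f, hf, -⟩
    have := Fintype.card_le_of_injective f hf.injective
    simpa using this
  unfold maxDecr
  apply le_antisymm
  · apply csSup_le
    · exact ⟨0, Fin.elim0, fun a => a.elim0, fun a => a.elim0⟩
    rintro k ⟨f, hf, hxf⟩
    by_contra hcon
    push_neg at hcon
    have hk2 : k ≤ n + n := hDb k ⟨f, hf, hxf⟩
    have gap : ∀ d : ℕ, ∀ i j : Fin k, (i : ℕ) + d = (j : ℕ) → (f i : ℕ) + d ≤ (f j : ℕ) := by
      intro d
      induction d with
      | zero =>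
        intro i j hij
        have : i = j := Fin.ext (by omega)
        subst this; simp
      | succ d ih =>
        intro i j hij
        have hlt : (i : ℕ) + d < k := by have := j.isLt; omega
        have h1 := ih i ⟨(i : ℕ) + d, hlt⟩ rfl
        have h2 : f ⟨(i : ℕ) + d, hlt⟩ < f j := hf (by rw [Fin.lt_def]; simp; omega)
        rw [Fin.lt_def] at h2
        omega
    have hkn : n + 1 ≤ k := by omega
    have hKpos : 1 ≤ K := by omega
    have hk1 : k - 1 < k := by omega
    have h0 : 0 < k := by omega
    have hflast : n ≤ (f ⟨k - 1, hk1⟩ : ℕ) := by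
      have := gap (k - 1) ⟨0, h0⟩ ⟨k - 1, hk1⟩ (by simp)
      omega
    set A := Finset.univ.filter (fun i : Fin k => n ≤ (f i : ℕ)) with hA
    have hAne : A.Nonempty := ⟨⟨k - 1, hk1⟩, by simp [hA, hflast]⟩
    set p : Fin k := A.min' hAne with hp
    have hpA : p ∈ A := Finset.min'_mem _ _
    have hfp : n ≤ (f p : ℕ) := by
      rw [hA] at hpA
      simpa using hpA
    have hf0 : (f ⟨0, h0⟩ : ℕ) < n := by
      have h1 := gap (k - 1) ⟨0, h0⟩ ⟨k - 1, hk1⟩ (by simp)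
      have h2 := (f ⟨k - 1, hk1⟩).isLt
      omega
    have hp1 : 1 ≤ (p : ℕ) := by
      by_contra hc
      have : p = ⟨0, h0⟩ := Fin.ext (show (p : ℕ) = 0 by omega)
      rw [this] at hfp
      omega
    have hp'lt : (p : ℕ) - 1 < k := by have := p.isLt; omega
    have hfp' : (f ⟨(p : ℕ) - 1, hp'lt⟩ : ℕ) < n := by
      by_contra hc
      push_neg at hc
      have hmem : (⟨(p : ℕ) - 1, hp'lt⟩ : Fin k) ∈ A := by simp [hA, hc]
      have hle := Finset.min'_le A _ hmem
      rw [← hp] at hle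
      rw [Fin.le_def] at hle
      simp at hle
      omega
    have hgap1 : (f ⟨0, h0⟩ : ℕ) + ((p : ℕ) - 1) ≤ (f ⟨(p : ℕ) - 1, hp'lt⟩ : ℕ) :=
      gap ((p : ℕ) - 1) ⟨0, h0⟩ ⟨(p : ℕ) - 1, hp'lt⟩ (by simp)
    have hgap2 : (f p : ℕ) + (k - 1 - (p : ℕ)) ≤ (f ⟨k - 1, hk1⟩ : ℕ) :=
      gap (k - 1 - (p : ℕ)) p ⟨k - 1, hk1⟩ (by simp; omega)
    have hlastlt : (f ⟨k - 1, hk1⟩ : ℕ) < n + n := (f ⟨k - 1, hk1⟩).isLt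
    set q : ℕ := k - (p : ℕ) with hq
    have hqn : q ≤ n := by omega
    have hpn : (p : ℕ) ≤ n := by omega
    have hpK : n - K + 1 ≤ (p : ℕ) := by omega
    have hx1 : x (f ⟨(p : ℕ) - 1, hp'lt⟩) = T ((f ⟨(p : ℕ) - 1, hp'lt⟩ : ℕ)) :=
      hxl _ (f _).isLt hfp'
    have hx2 : x (f p) = - T (2 * n - 1 - (f p : ℕ)) := hxr _ (f p).isLt hfp
    have hord : x (f p) < x (f ⟨(p : ℕ) - 1, hp'lt⟩) := by
      have : (⟨(p : ℕ) - 1, hp'lt⟩ : Fin k) < p := by rw [Fin.lt_def]; simp; omega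
      exact hxf this
    have hTp : T ((f ⟨(p : ℕ) - 1, hp'lt⟩ : ℕ)) ≤ T ((p : ℕ) - 1) := hanti _ _ (by omega)
    have hTq : T (2 * n - 1 - (f p : ℕ)) ≤ T (q - 1) := hanti _ _ (by omega)
    set r : ℕ := (p : ℕ) - 1 - (n - K) with hr
    have hrK : r < K := by omega
    have hKr := hK r hrK
    have e1 : n - K + r = (p : ℕ) - 1 := by omega
    rw [e1] at hKr
    have hTq2 : T (q - 1) ≤ T (n - 1 - r) := hanti _ _ (by omega)
    linarith
  · apply le_csSup ⟨n + n, hDb⟩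
    obtain ⟨i, hi1, hi2, hi3, hcross⟩ :
        ∃ i : ℕ, n - K ≤ i ∧ i ≤ n ∧ 1 ≤ i ∧
          ∀ m : ℕ, i ≤ m → m < n + n - K → - T (2 * n - K - 1 - m) < T (i - 1) := by
      rcases eq_or_lt_of_le hKn with hKeq | hKlt
      · exact ⟨n, by omega, le_refl n, hn, fun m hm1 hm2 => absurd hm2 (by omega)⟩
      · obtain ⟨r, hrK, hrpos⟩ := hK1 hKlt
        refine ⟨n - K + r, by omega, by omega, by omega, ?_⟩
        intro m hm1 hm2
        have h1 : T (n - 1 - r) ≤ T (2 * n - K - 1 - m) := hanti _ _ (by omega)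
        have h2 : n - K + r - 1 = n - K - 1 + r := by omega
        rw [h2]
        linarith
    refine ⟨fun m => if h : (m : ℕ) < i then ⟨(m : ℕ), by have := m.isLt; omega⟩
        else ⟨(m : ℕ) + K, by have := m.isLt; omega⟩, ?_, ?_⟩
    · intro a b hab
      rw [Fin.lt_def] at hab
      dsimp only
      split_ifs with h1 h2 h3
      · exact Fin.mk_lt_mk.mpr (by omega)
      · exact Fin.mk_lt_mk.mpr (by omega)
      · exact Fin.mk_lt_mk.mpr (by omega)
      · exact Fin.mk_lt_mk.mpr (by omega)
    · intro a b hab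
      rw [Fin.lt_def] at hab
      simp only [Function.comp_apply]
      split_ifs with hb ha ha
      · -- a < i, b < i
        rw [hxl (b : ℕ) (by have := b.isLt; omega) (by omega),
          hxl (a : ℕ) (by have := a.isLt; omega) (by omega)]
        exact hstrict _ _ hab (by omega)
      · exact absurd hab (by omega)
      · -- a < i ≤ b : cross case
        rw [hxr ((b : ℕ) + K) (by have := b.isLt; omega) (by omega),
          hxl (a : ℕ) (by have := a.isLt; omega) (by omega)]
        have e : 2 * n - 1 - ((b : ℕ) + K) = 2 * n - K - 1 - (b : ℕ) := by omega
        rw [e]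
        have h1 := hcross (b : ℕ) (by omega) b.isLt
        have h2 : T (i - 1) ≤ T (a : ℕ) := hanti _ _ (by omega)
        linarith
      · -- i ≤ a < b
        rw [hxr ((b : ℕ) + K) (by have := b.isLt; omega) (by omega),
          hxr ((a : ℕ) + K) (by have := a.isLt; omega) (by omega)]
        have h1 : T (2 * n - 1 - ((a : ℕ) + K)) < T (2 * n - 1 - ((b : ℕ) + K)) := by
          apply hstrict
          · have := b.isLt; omega
          · omega
        linarith

/-- For strictly decreasing `t₁ > ⋯ > t_n` with integer pairwise differences
and `t_n ≤ −t_n`, the second-column length of the RS tableau of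
`λ⁻ = (t₁,…,t_n,−t_n,…,−t₁)` equals the largest `k` with
`t_{n−k+r} + t_{n−r+1} ≤ 0` for all `r = 1,…,k`. -/
theorem second_column_symmetric (n : ℕ) (hn : 0 < n) (t : Fin n → ℝ)
    (ht : StrictAnti t)
    (htz : ∀ i j, ∃ z : ℤ, t i - t j = (z : ℝ))
    (hneg : t ⟨n - 1, by omega⟩ ≤ 0) :
    secondColumn (n + n)
        (Fin.append t (fun k : Fin n => - t ⟨n - 1 - (k : ℕ), by have := k.isLt; omega⟩)) =
      sSup {k : ℕ | ∃ _h1 : k ≤ n, ∀ r : Fin k,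
        t ⟨n - k + (r : ℕ), by have := r.isLt; omega⟩ +
          t ⟨n - 1 - (r : ℕ), by have := r.isLt; omega⟩ ≤ 0} := by
  set x : Fin (n + n) → ℝ :=
    Fin.append t (fun k : Fin n => - t ⟨n - 1 - (k : ℕ), by have := k.isLt; omega⟩) with hxdef
  set S : Set ℕ := {k : ℕ | ∃ _h1 : k ≤ n, ∀ r : Fin k,
      t ⟨n - k + (r : ℕ), by have := r.isLt; omega⟩ +
        t ⟨n - 1 - (r : ℕ), by have := r.isLt; omega⟩ ≤ 0} with hSdef
  have hS0 : 0 ∈ S := ⟨Nat.zero_le n, fun r => r.elim0⟩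
  have hSbdd : BddAbove S := ⟨n, fun k hk => by obtain ⟨h, -⟩ := hk; exact h⟩
  set K := sSup S with hKdef
  have hKS : K ∈ S := Nat.sSup_mem ⟨0, hS0⟩ hSbdd
  obtain ⟨hKn, hKall⟩ := hKS
  set T : ℕ → ℝ := fun m => t ⟨min m (n - 1), by omega⟩ with hTdef
  have hTeq : ∀ (m : ℕ) (h : m < n), T m = t ⟨m, h⟩ := by
    intro m h
    rw [hTdef]
    exact congrArg t (Fin.ext (by simp; omega))
  have hanti : ∀ a b : ℕ, a ≤ b → T b ≤ T a := by
    intro a b hab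
    exact ht.antitone (by rw [Fin.le_def]; simp; omega)
  have hstrict : ∀ a b : ℕ, a < b → b < n → T b < T a := by
    intro a b hab hbn
    exact ht (by rw [Fin.lt_def]; simp; omega)
  have hK : ∀ r : ℕ, r < K → T (n - K + r) + T (n - 1 - r) ≤ 0 := by
    intro r hr
    have h := hKall ⟨r, hr⟩
    rw [hTeq _ (by omega), hTeq _ (by omega)]
    exact h
  have hK1 : K < n → ∃ r ≤ K, 0 < T (n - K - 1 + r) + T (n - 1 - r) := by
    intro hKlt
    have hnot : K + 1 ∉ S := fun hmem => by
      have := le_csSup hSbdd hmem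
      omega
    rw [hSdef] at hnot
    simp only [Set.mem_setOf_eq, not_exists] at hnot
    have h2 := hnot (by omega)
    push_neg at h2
    obtain ⟨r, hr⟩ := h2
    refine ⟨(r : ℕ), by have := r.isLt; omega, ?_⟩
    have e1 : n - K - 1 + (r : ℕ) = n - (K + 1) + (r : ℕ) := by omega
    rw [e1, hTeq _ (by have := r.isLt; omega), hTeq _ (by omega)]
    exact hr
  have hxl : ∀ (m : ℕ) (h : m < n + n), m < n → x ⟨m, h⟩ = T m := by
    intro m h hm
    rw [hxdef, hTeq _ hm]
    have e : (⟨m, h⟩ : Fin (n + n)) = Fin.castAdd n ⟨m, hm⟩ := Fin.ext rfl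
    rw [e, Fin.append_left]
  have hxr : ∀ (m : ℕ) (h : m < n + n), n ≤ m → x ⟨m, h⟩ = - T (2 * n - 1 - m) := by
    intro m h hm
    rw [hxdef]
    have e : (⟨m, h⟩ : Fin (n + n)) = Fin.natAdd n ⟨m - n, by omega⟩ := Fin.ext (by simp; omega)
    rw [e, Fin.append_right, hTeq _ (by omega)]
    have e2 : n - 1 - ((⟨m - n, by omega⟩ : Fin n) : ℕ) = 2 * n - 1 - m := by simp; omega
    exact congrArg (fun z => - t z) (Fin.ext e2)
  have hmain := maxDecr_aux n K hn hKn T hanti hstrict hK hK1 x hxl hxr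
  rw [secondColumn, hmain]
  omega

end Stmt11
end

section
/- In the root poset Δ(p⁺) for e7(-25) (the 27-element poset of positive noncompact roots of E₇ with respect to the parabolic at node 7), there are exactly 56 lower-order ideals in total, of which exactly 1 has width 0, exactly 7 have width 1, exactly 27 have width 2, and exactly 21 have width 3. -/
namespace Stmt15

set_option maxRecDepth 100000

/-- The 27 positive roots of `E₇` whose coefficient at the simple root `α₇`
equals 1, in simple-root coordinates (Bourbaki numbering).  This is the poset
`Δ(p⁺)` of positive noncompact roots of `e7(-25)`. -/
def E7p : Finset (Fin 7 → ℕ) :=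
  { ![0, 0, 0, 0, 0, 0, 1], ![0, 0, 0, 0, 0, 1, 1], ![0, 0, 0, 0, 1, 1, 1],
    ![0, 0, 0, 1, 1, 1, 1], ![0, 0, 1, 1, 1, 1, 1], ![0, 1, 0, 1, 1, 1, 1],
    ![0, 1, 1, 1, 1, 1, 1], ![0, 1, 1, 2, 1, 1, 1], ![0, 1, 1, 2, 2, 1, 1],
    ![0, 1, 1, 2, 2, 2, 1], ![1, 0, 1, 1, 1, 1, 1], ![1, 1, 1, 1, 1, 1, 1],
    ![1, 1, 1, 2, 1, 1, 1], ![1, 1, 1, 2, 2, 1, 1], ![1, 1, 1, 2, 2, 2, 1],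
    ![1, 1, 2, 2, 1, 1, 1], ![1, 1, 2, 2, 2, 1, 1], ![1, 1, 2, 2, 2, 2, 1],
    ![1, 1, 2, 3, 2, 1, 1], ![1, 1, 2, 3, 2, 2, 1], ![1, 1, 2, 3, 3, 2, 1],
    ![1, 2, 2, 3, 2, 1, 1], ![1, 2, 2, 3, 2, 2, 1], ![1, 2, 2, 3, 3, 2, 1],
    ![1, 2, 2, 4, 3, 2, 1], ![1, 2, 3, 4, 3, 2, 1], ![2, 2, 3, 4, 3, 2, 1] }

/-- The root order: componentwise comparison of simple-root coordinates. -/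
def le (a b : Fin 7 → ℕ) : Prop := ∀ i, a i ≤ b i

def IsLowerIdeal (Y : Finset (Fin 7 → ℕ)) : Prop :=
  Y ⊆ E7p ∧ ∀ x ∈ E7p, ∀ y ∈ Y, le x y → x ∈ Y

def IsAntichainIn (Y A : Finset (Fin 7 → ℕ)) : Prop :=
  A ⊆ Y ∧ ∀ a ∈ A, ∀ b ∈ A, a ≠ b → ¬ le a b ∧ ¬ le b a

def WidthIs (Y : Finset (Fin 7 → ℕ)) (m : ℕ) : Prop :=
  (∃ A, IsAntichainIn Y A ∧ A.card = m) ∧ ∀ A, IsAntichainIn Y A → A.card ≤ m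

/-! ### Auxiliary setup -/

instance decLe (a b : Fin 7 → ℕ) : Decidable (le a b) :=
  inferInstanceAs (Decidable (∀ i, a i ≤ b i))

/-- Enumeration of the 27 roots. -/
def R : Fin 27 → (Fin 7 → ℕ) :=
  ![![0, 0, 0, 0, 0, 0, 1], ![0, 0, 0, 0, 0, 1, 1], ![0, 0, 0, 0, 1, 1, 1],
    ![0, 0, 0, 1, 1, 1, 1], ![0, 0, 1, 1, 1, 1, 1], ![0, 1, 0, 1, 1, 1, 1],
    ![0, 1, 1, 1, 1, 1, 1], ![0, 1, 1, 2, 1, 1, 1], ![0, 1, 1, 2, 2, 1, 1],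
    ![0, 1, 1, 2, 2, 2, 1], ![1, 0, 1, 1, 1, 1, 1], ![1, 1, 1, 1, 1, 1, 1],
    ![1, 1, 1, 2, 1, 1, 1], ![1, 1, 1, 2, 2, 1, 1], ![1, 1, 1, 2, 2, 2, 1],
    ![1, 1, 2, 2, 1, 1, 1], ![1, 1, 2, 2, 2, 1, 1], ![1, 1, 2, 2, 2, 2, 1],
    ![1, 1, 2, 3, 2, 1, 1], ![1, 1, 2, 3, 2, 2, 1], ![1, 1, 2, 3, 3, 2, 1],
    ![1, 2, 2, 3, 2, 1, 1], ![1, 2, 2, 3, 2, 2, 1], ![1, 2, 2, 3, 3, 2, 1],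
    ![1, 2, 2, 4, 3, 2, 1], ![1, 2, 3, 4, 3, 2, 1], ![2, 2, 3, 4, 3, 2, 1]]

/-- `dm i` is the bitmask of all indices `j` with `R j ≤ R i`. -/
def dm : Fin 27 → ℕ :=
  ![1, 3, 7, 15, 31, 47, 127, 255, 511, 1023, 1055, 3199, 7423, 15871, 32767,
    40191, 114175, 262143, 376319, 1048575, 2097151, 2473471, 7340031,
    16777215, 33554431, 67108863, 134217727]

lemma hmemE : ∀ i : Fin 27, R i ∈ E7p := by decide

lemma hsurj : ∀ x ∈ E7p, ∃ i : Fin 27, R i = x := by decide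

lemma hRinj : ∀ i j : Fin 27, R i = R j → i = j := by decide

lemma hRinj' : Function.Injective R := fun a b h => hRinj a b h

lemma hdm : ∀ i j : Fin 27, le (R i) (R j) ↔ (dm j).testBit (i : ℕ) = true := by decide

/-- comparability of indices -/
def comp (i j : Fin 27) : Prop :=
  (dm j).testBit (i : ℕ) = true ∨ (dm i).testBit (j : ℕ) = true

instance (i j : Fin 27) : Decidable (comp i j) := inferInstanceAs (Decidable (_ ∨ _))

lemma hcomp : ∀ i j : Fin 27, comp i j ↔ (le (R i) (R j) ∨ le (R j) (R i)) := by decide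

lemma hcompRefl : ∀ i : Fin 27, comp i i := by decide

lemma not_comp_symm {i j : Fin 27} (h : ¬ comp i j) : ¬ comp j i := fun hc => h hc.symm

/-- bitmask `n` as a set of indices -/
def tb (n : ℕ) : Finset (Fin 27) :=
  Finset.univ.filter (fun i : Fin 27 => n.testBit (i : ℕ) = true)

lemma mem_tb {n : ℕ} {i : Fin 27} : i ∈ tb n ↔ n.testBit (i : ℕ) = true := by
  simp [tb]

/-- lower-ideal property at the index level -/
def IdealS (S : Finset (Fin 27)) : Prop :=
  ∀ i j : Fin 27, j ∈ S → le (R i) (R j) → i ∈ S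

/-- lower-ideal property at the bitmask level -/
def IdealM (n : ℕ) : Prop :=
  ∀ i j : Fin 27, n.testBit (i : ℕ) = true → (dm i).testBit (j : ℕ) = true →
    n.testBit (j : ℕ) = true

instance (n : ℕ) : Decidable (IdealM n) :=
  inferInstanceAs (Decidable (∀ _ _, _ → _ → _))

/-- the 56 lower ideals, as bitmasks -/
def I56 : Finset ℕ :=
  {0, 1, 3, 7, 15, 31, 47, 63, 127, 255, 511, 1023, 1055, 1087, 1151, 1279,
   1535, 2047, 3199, 3327, 3583, 4095, 7423, 7679, 8191, 15871, 16383, 32767,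
   40191, 40447, 40959, 48639, 49151, 65535, 114175, 114687, 131071, 262143,
   376319, 376831, 393215, 524287, 1048575, 2097151, 2473471, 2473983,
   2490367, 2621439, 3145727, 4194303, 7340031, 8388607, 16777215, 33554431,
   67108863, 134217727}

def W0 : Finset ℕ := {0}

def W1 : Finset ℕ := {1, 3, 7, 15, 31, 47, 1055}

def W2 : Finset ℕ :=
  {63, 127, 255, 511, 1023, 1087, 1151, 1279, 1535, 2047, 3199, 3327, 3583,
   4095, 7423, 7679, 8191, 15871, 16383, 32767, 40191, 40447, 40959, 48639,
   114175, 376319, 2473471}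

def W3 : Finset ℕ :=
  {49151, 65535, 114687, 131071, 262143, 376831, 393215, 524287, 1048575,
   2097151, 2473983, 2490367, 2621439, 3145727, 4194303, 7340031, 8388607,
   16777215, 33554431, 67108863, 134217727}

lemma htbInj : ∀ n ∈ I56, ∀ m ∈ I56, tb n = tb m → n = m := by decide

lemma hpart : ∀ n ∈ I56, n ∈ W0 ∨ n ∈ W1 ∨ n ∈ W2 ∨ n ∈ W3 := by decide

/-! ### chains -/

def c1 : Fin 17 → Fin 27 := ![0, 1, 2, 3, 4, 6, 7, 8, 9, 14, 17, 19, 20, 23, 24, 25, 26]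
def c2 : Fin 8 → Fin 27 := ![5, 11, 12, 13, 16, 18, 21, 22]
def c3 : Fin 2 → Fin 27 := ![10, 15]

lemma hc1 : ∀ i j : Fin 17, i ≤ j → le (R (c1 i)) (R (c1 j)) := by decide
lemma hc2 : ∀ i j : Fin 8, i ≤ j → le (R (c2 i)) (R (c2 j)) := by decide
lemma hc3 : ∀ i j : Fin 2, i ≤ j → le (R (c3 i)) (R (c3 j)) := by decide

lemma hcover : ∀ x : Fin 27,
    (∃ i, c1 i = x) ∨ (∃ i, c2 i = x) ∨ (∃ i, c3 i = x) := by decide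

/-- chain index of each element -/
def cIdx : Fin 27 → Fin 3 :=
  ![0, 0, 0, 0, 0, 1, 0, 0, 0, 0, 2, 1, 1, 1, 0, 2, 1, 0, 1, 0, 0, 1, 1, 0, 0, 0, 0]

lemma hsame : ∀ x y : Fin 27, cIdx x = cIdx y → comp x y := by decide

/-- cumulative prefix masks of the three chains -/
def cm1 : Fin 18 → ℕ :=
  ![0, 1, 3, 7, 15, 31, 95, 223, 479, 991, 17375, 148447, 672735, 1721311,
    10109919, 26887135, 60441567, 127550431]
def cm2 : Fin 9 → ℕ := ![0, 32, 2080, 6176, 14368, 79904, 342048, 2439200, 6633504]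
def cm3 : Fin 3 → ℕ := ![0, 1024, 33792]

lemma tb_lor (x y : ℕ) : tb (x ||| y) = tb x ∪ tb y := by
  ext i
  simp [tb, Finset.mem_filter, Finset.mem_union, Nat.testBit_lor, Bool.or_eq_true]

set_option maxHeartbeats 8000000 in
lemma hpm1 : ∀ a : Fin 18,
    tb (cm1 a) = (Finset.univ.filter (fun x : Fin 17 => (x : ℕ) < (a : ℕ))).image c1 := by
  decide

set_option maxHeartbeats 8000000 in
lemma hpm2 : ∀ b : Fin 9,
    tb (cm2 b) = (Finset.univ.filter (fun x : Fin 8 => (x : ℕ) < (b : ℕ))).image c2 := by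
  decide

set_option maxHeartbeats 8000000 in
lemma hpm3 : ∀ c : Fin 3,
    tb (cm3 c) = (Finset.univ.filter (fun x : Fin 2 => (x : ℕ) < (c : ℕ))).image c3 := by
  decide

lemma hpm : ∀ (a : Fin 18) (b : Fin 9) (c : Fin 3),
    tb (cm1 a ||| cm2 b ||| cm3 c) =
      (Finset.univ.filter (fun x : Fin 17 => (x : ℕ) < (a : ℕ))).image c1 ∪
      (Finset.univ.filter (fun x : Fin 8 => (x : ℕ) < (b : ℕ))).image c2 ∪
      (Finset.univ.filter (fun x : Fin 2 => (x : ℕ) < (c : ℕ))).image c3 := by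
  intro a b c
  rw [tb_lor, tb_lor, hpm1, hpm2, hpm3]

/-- mask form of the ideal condition -/
def IdealMM (n : ℕ) : Prop :=
  ∀ i : Fin 27, n.testBit (i : ℕ) = true → dm i &&& n = dm i

instance (n : ℕ) : Decidable (IdealMM n) :=
  inferInstanceAs (Decidable (∀ _, _ → _))

lemma hdmlt : ∀ i : Fin 27, dm i < 2 ^ 27 := by decide

lemma idealMM_iff (n : ℕ) : IdealMM n ↔ IdealM n := by
  constructor
  · intro h i j hi hj
    have hc := congrArg (fun m => m.testBit (j : ℕ)) (h i hi)
    simp only [Nat.testBit_land] at hc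
    rw [hj] at hc
    simpa using hc
  · intro h i hi
    apply Nat.eq_of_testBit_eq
    intro k
    rw [Nat.testBit_land]
    by_cases hk : (dm i).testBit k = true
    · have hk27 : k < 27 := by
        by_contra hge
        have hlt : dm i < 2 ^ k :=
          lt_of_lt_of_le (hdmlt i) (Nat.pow_le_pow_right (by norm_num) (by omega))
        rw [Nat.testBit_lt_two_pow hlt] at hk
        exact Bool.noConfusion hk
      have hnk : n.testBit k = true := h i ⟨k, hk27⟩ hi hk
      rw [hk, hnk]
      rfl
    · rw [Bool.not_eq_true] at hk
      rw [hk]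
      rfl

lemma hsoundMM : ∀ n ∈ I56, IdealMM n := by decide

set_option maxHeartbeats 20000000 in
lemma henum : ∀ (a : Fin 18) (b : Fin 9) (c : Fin 3),
    IdealMM (cm1 a ||| cm2 b ||| cm3 c) → (cm1 a ||| cm2 b ||| cm3 c) ∈ I56 := by decide

/-! ### width data -/

lemma hW1a : ∀ n ∈ W1, ∃ i : Fin 27, n.testBit (i : ℕ) = true := by decide

lemma hW1b : ∀ n ∈ W1, ∀ i j : Fin 27, n.testBit (i : ℕ) = true →
    n.testBit (j : ℕ) = true → i ≠ j → comp i j := by decide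

lemma hW2a : ∀ n ∈ W2, ∃ i j : Fin 27, n.testBit (i : ℕ) = true ∧
    n.testBit (j : ℕ) = true ∧ ¬ comp i j := by decide

/-- mask of elements comparable to `i` -/
def ck : Fin 27 → ℕ :=
  ![134217727, 134217727, 134217727, 134217727, 134217695, 134216687,
    134216703, 134214655, 134177791, 131744767, 134216735, 134216831,
    134216959, 134184447, 131760127, 134192383, 134200831, 131858431,
    134069759, 132120575, 127926271, 132496895, 133169151, 134217727,
    134217727, 134217727, 134217727]

set_option maxHeartbeats 8000000 in
lemma hck : ∀ i j : Fin 27, (ck i).testBit (j : ℕ) = true ↔ comp i j := by decide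

set_option maxHeartbeats 20000000 in
lemma hW2b' : ∀ n ∈ W2, ∀ i j : Fin 27, n.testBit (i : ℕ) = true →
    n.testBit (j : ℕ) = true → comp i j ∨ n &&& (ck i ||| ck j) = n := by decide

lemma hW2b : ∀ n ∈ W2, ∀ i j k : Fin 27, n.testBit (i : ℕ) = true →
    n.testBit (j : ℕ) = true → n.testBit (k : ℕ) = true →
    comp i j ∨ comp i k ∨ comp j k := by
  intro n hn i j k hi hj hk
  rcases hW2b' n hn i j hi hj with h | h
  · exact Or.inl h
  · have hb := congrArg (fun m => m.testBit (k : ℕ)) h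
    simp only [Nat.testBit_land, Nat.testBit_lor] at hb
    rw [hk] at hb
    have hor : ((ck i).testBit (k : ℕ) || (ck j).testBit (k : ℕ)) = true := by
      simpa using hb
    rw [Bool.or_eq_true] at hor
    rcases hor with h' | h'
    · exact Or.inr (Or.inl ((hck i k).mp h'))
    · exact Or.inr (Or.inr ((hck j k).mp h'))

lemma hW3bits : ∀ n ∈ W3, n.testBit 9 = true ∧ n.testBit 13 = true ∧
    n.testBit 15 = true := by decide

lemma hW3inc : ¬ comp ⟨9, by omega⟩ ⟨13, by omega⟩ ∧ ¬ comp ⟨9, by omega⟩ ⟨15, by omega⟩ ∧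
    ¬ comp ⟨13, by omega⟩ ⟨15, by omega⟩ := by decide

lemma hW3a : ∀ n ∈ W3, ∃ i j k : Fin 27, n.testBit (i : ℕ) = true ∧
    n.testBit (j : ℕ) = true ∧ n.testBit (k : ℕ) = true ∧
    ¬ comp i j ∧ ¬ comp i k ∧ ¬ comp j k := by
  intro n hn
  obtain ⟨h9, h13, h15⟩ := hW3bits n hn
  exact ⟨⟨9, by omega⟩, ⟨13, by omega⟩, ⟨15, by omega⟩, h9, h13, h15,
    hW3inc.1, hW3inc.2.1, hW3inc.2.2⟩

/-! ### generic prefix lemma -/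

lemma prefix_eq {n : ℕ} (T : Finset (Fin n)) (h : ∀ i j : Fin n, i ≤ j → j ∈ T → i ∈ T) :
    T = Finset.univ.filter (fun x : Fin n => (x : ℕ) < T.card) := by
  ext j
  simp only [Finset.mem_filter, Finset.mem_univ, true_and]
  constructor
  · intro hj
    have hsub : Finset.Iic j ⊆ T := fun i hi => h i j (Finset.mem_Iic.mp hi) hj
    have hc := Finset.card_le_card hsub
    rw [Fin.card_Iic] at hc
    omega
  · intro hj
    by_contra hjT
    have hsub : T ⊆ Finset.Iio j := by
      intro k hk
      rcases le_or_gt j k with h1 | h1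
      · exact absurd (h j k h1 hk) hjT
      · exact Finset.mem_Iio.mpr h1
    have hc := Finset.card_le_card hsub
    rw [Fin.card_Iio] at hc
    omega

/-! ### transport between vector level and index level -/

def idxOf (Y : Finset (Fin 7 → ℕ)) : Finset (Fin 27) :=
  Finset.univ.filter (fun i : Fin 27 => R i ∈ Y)

lemma mem_idxOf {Y : Finset (Fin 7 → ℕ)} {i : Fin 27} : i ∈ idxOf Y ↔ R i ∈ Y := by
  simp [idxOf]

lemma image_subset_E7p (S : Finset (Fin 27)) : S.image R ⊆ E7p := by
  intro x hx
  rcases Finset.mem_image.mp hx with ⟨i, _, rfl⟩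
  exact hmemE i

lemma image_idxOf {Y : Finset (Fin 7 → ℕ)} (hY : Y ⊆ E7p) : (idxOf Y).image R = Y := by
  ext x
  constructor
  · intro hx
    rcases Finset.mem_image.mp hx with ⟨i, hi, rfl⟩
    exact mem_idxOf.mp hi
  · intro hx
    obtain ⟨i, rfl⟩ := hsurj x (hY hx)
    exact Finset.mem_image_of_mem R (mem_idxOf.mpr hx)

lemma ideal_transport (S : Finset (Fin 27)) :
    IsLowerIdeal (S.image R) ↔ IdealS S := by
  constructor
  · rintro ⟨hsub, hcl⟩ i j hj hle
    have hmem : R i ∈ S.image R :=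
      hcl (R i) (hmemE i) (R j) (Finset.mem_image_of_mem R hj) hle
    rcases Finset.mem_image.mp hmem with ⟨k, hk, hki⟩
    rwa [hRinj k i hki] at hk
  · intro h
    refine ⟨image_subset_E7p S, ?_⟩
    intro x hx y hy hle
    obtain ⟨i, rfl⟩ := hsurj x hx
    rcases Finset.mem_image.mp hy with ⟨j, hj, rfl⟩
    exact Finset.mem_image_of_mem R (h i j hj hle)

lemma idealS_tb (n : ℕ) : IdealS (tb n) ↔ IdealM n := by
  constructor
  · intro h i j hi hij
    exact mem_tb.mp (h j i (mem_tb.mpr hi) ((hdm j i).mpr hij))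
  · intro h i j hj hle
    exact mem_tb.mpr (h j i (mem_tb.mp hj) ((hdm i j).mp hle))

/-- antichain at the index level -/
def AntiS (S B : Finset (Fin 27)) : Prop :=
  B ⊆ S ∧ ∀ a ∈ B, ∀ b ∈ B, a ≠ b → ¬ le (R a) (R b) ∧ ¬ le (R b) (R a)

def WidthS (S : Finset (Fin 27)) (m : ℕ) : Prop :=
  (∃ B, AntiS S B ∧ B.card = m) ∧ ∀ B, AntiS S B → B.card ≤ m

lemma anti_transport (S B : Finset (Fin 27)) :
    IsAntichainIn (S.image R) (B.image R) ↔ AntiS S B := by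
  constructor
  · rintro ⟨hsub, hp⟩
    refine ⟨(Finset.image_subset_image_iff hRinj').mp hsub, ?_⟩
    intro a ha b hb hne
    exact hp (R a) (Finset.mem_image_of_mem R ha) (R b) (Finset.mem_image_of_mem R hb)
      (fun h => hne (hRinj a b h))
  · rintro ⟨hsub, hp⟩
    refine ⟨Finset.image_subset_image hsub, ?_⟩
    intro x hx y hy hne
    rcases Finset.mem_image.mp hx with ⟨i, hi, rfl⟩
    rcases Finset.mem_image.mp hy with ⟨j, hj, rfl⟩
    exact hp i hi j hj (fun h => hne (congrArg R h))

lemma anti_repr {S : Finset (Fin 27)} {A : Finset (Fin 7 → ℕ)}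
    (hA : IsAntichainIn (S.image R) A) :
    A = (idxOf A).image R ∧ AntiS S (idxOf A) := by
  have hAE : A ⊆ E7p := fun x hx => image_subset_E7p S (hA.1 hx)
  have h1 : (idxOf A).image R = A := image_idxOf hAE
  have hA' := hA
  rw [← h1] at hA'
  exact ⟨h1.symm, (anti_transport S (idxOf A)).mp hA'⟩

lemma width_transport (S : Finset (Fin 27)) (m : ℕ) :
    WidthIs (S.image R) m ↔ WidthS S m := by
  constructor
  · rintro ⟨⟨A, hA, hAc⟩, hub⟩
    obtain ⟨hrepr, hAS⟩ := anti_repr hA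
    refine ⟨⟨idxOf A, hAS, ?_⟩, fun B hB => ?_⟩
    · rw [hrepr, Finset.card_image_of_injective _ hRinj'] at hAc
      exact hAc
    · have h := hub (B.image R) ((anti_transport S B).mpr hB)
      rwa [Finset.card_image_of_injective _ hRinj'] at h
  · rintro ⟨⟨B, hB, hBc⟩, hub⟩
    refine ⟨⟨B.image R, (anti_transport S B).mpr hB,
      by rwa [Finset.card_image_of_injective _ hRinj']⟩, fun A hA => ?_⟩
    obtain ⟨hrepr, hAS⟩ := anti_repr hA
    have h := hub (idxOf A) hAS
    rw [hrepr, Finset.card_image_of_injective _ hRinj']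
    exact h

/-! ### widths of the ideals -/

lemma not_comp_pair {i j : Fin 27} (h : ¬ comp i j) :
    ¬ le (R i) (R j) ∧ ¬ le (R j) (R i) :=
  ⟨fun hl => h ((hcomp i j).mpr (Or.inl hl)), fun hl => h ((hcomp i j).mpr (Or.inr hl))⟩

lemma comp_of_anti {S B : Finset (Fin 27)} (hB : AntiS S B) {a b : Fin 27}
    (ha : a ∈ B) (hb : b ∈ B) (hc : comp a b) : a = b := by
  by_contra hne
  rcases (hcomp a b).mp hc with h | h
  · exact (hB.2 a ha b hb hne).1 h
  · exact (hB.2 a ha b hb hne).2 h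

lemma ne_of_not_comp {i j : Fin 27} (h : ¬ comp i j) : i ≠ j :=
  fun he => h (he ▸ hcompRefl i)

lemma anti_card_le_three {S B : Finset (Fin 27)} (hB : AntiS S B) : B.card ≤ 3 := by
  have h := Finset.card_le_card_of_injOn cIdx
    (fun a _ => Finset.mem_univ (cIdx a))
    (fun a ha b hb hab =>
      comp_of_anti hB (Finset.mem_coe.mp ha) (Finset.mem_coe.mp hb) (hsame a b hab))
  simpa using h

lemma widthS_unique {S : Finset (Fin 27)} {w w' : ℕ}
    (h : WidthS S w) (h' : WidthS S w') : w = w' := by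
  obtain ⟨⟨B, hB, hc⟩, hub⟩ := h
  obtain ⟨⟨B', hB', hc'⟩, hub'⟩ := h'
  have h1 : w ≤ w' := hc ▸ hub' B hB
  have h2 : w' ≤ w := hc' ▸ hub B' hB'
  omega

lemma width0 : ∀ n ∈ W0, WidthS (tb n) 0 := by
  intro n hn
  have h0 : n = 0 := Finset.mem_singleton.mp hn
  subst h0
  have he : tb 0 = ∅ := by decide
  constructor
  · exact ⟨∅, ⟨Finset.empty_subset _,
      fun a ha => absurd ha (Finset.notMem_empty a)⟩, Finset.card_empty⟩
  · intro B hB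
    have hBe : B = ∅ := Finset.subset_empty.mp (he ▸ hB.1)
    simp [hBe]

lemma width1 : ∀ n ∈ W1, WidthS (tb n) 1 := by
  intro n hn
  obtain ⟨i, hi⟩ := hW1a n hn
  constructor
  · refine ⟨{i}, ⟨Finset.singleton_subset_iff.mpr (mem_tb.mpr hi), ?_⟩,
      Finset.card_singleton i⟩
    intro a ha b hb hne
    rw [Finset.mem_singleton] at ha hb
    subst ha; subst hb; exact absurd rfl hne
  · intro B hB
    by_contra h
    push_neg at h
    obtain ⟨a, ha, b, hb, hne⟩ := Finset.one_lt_card.mp h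
    exact hne (comp_of_anti hB ha hb
      (hW1b n hn a b (mem_tb.mp (hB.1 ha)) (mem_tb.mp (hB.1 hb)) hne))

lemma width2 : ∀ n ∈ W2, WidthS (tb n) 2 := by
  intro n hn
  obtain ⟨i, j, hi, hj, hij⟩ := hW2a n hn
  have hne := ne_of_not_comp hij
  constructor
  · refine ⟨{i, j}, ⟨?_, ?_⟩, ?_⟩
    · intro a ha
      rcases Finset.mem_insert.mp ha with rfl | ha
      · exact mem_tb.mpr hi
      · rw [Finset.mem_singleton] at ha; subst ha; exact mem_tb.mpr hj
    · intro a ha b hb hab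
      rcases Finset.mem_insert.mp ha with rfl | ha
      · rcases Finset.mem_insert.mp hb with rfl | hb
        · exact absurd rfl hab
        · rw [Finset.mem_singleton] at hb; subst hb; exact not_comp_pair hij
      · rw [Finset.mem_singleton] at ha; subst ha
        rcases Finset.mem_insert.mp hb with rfl | hb
        · exact not_comp_pair (not_comp_symm hij)
        · rw [Finset.mem_singleton] at hb; subst hb; exact absurd rfl hab
    · rw [Finset.card_insert_of_notMem (by simp [hne]), Finset.card_singleton]
  · intro B hB
    by_contra h
    push_neg at h
    obtain ⟨a, ha, b, hb, c, hc, hab, hac, hbc⟩ := Finset.two_lt_card.mp h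
    rcases hW2b n hn a b c (mem_tb.mp (hB.1 ha)) (mem_tb.mp (hB.1 hb))
      (mem_tb.mp (hB.1 hc)) with hcc | hcc | hcc
    · exact hab (comp_of_anti hB ha hb hcc)
    · exact hac (comp_of_anti hB ha hc hcc)
    · exact hbc (comp_of_anti hB hb hc hcc)

lemma width3 : ∀ n ∈ W3, WidthS (tb n) 3 := by
  intro n hn
  obtain ⟨i, j, k, hi, hj, hk, hij, hik, hjk⟩ := hW3a n hn
  have hij' := ne_of_not_comp hij
  have hik' := ne_of_not_comp hik
  have hjk' := ne_of_not_comp hjk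
  constructor
  · refine ⟨{i, j, k}, ⟨?_, ?_⟩, ?_⟩
    · intro a ha
      simp only [Finset.mem_insert, Finset.mem_singleton] at ha
      rcases ha with rfl | rfl | rfl
      · exact mem_tb.mpr hi
      · exact mem_tb.mpr hj
      · exact mem_tb.mpr hk
    · intro a ha b hb hab
      simp only [Finset.mem_insert, Finset.mem_singleton] at ha hb
      rcases ha with rfl | rfl | rfl <;> rcases hb with rfl | rfl | rfl <;>
        first
          | exact absurd rfl hab
          | exact not_comp_pair hij
          | exact not_comp_pair (not_comp_symm hij)
          | exact not_comp_pair hik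
          | exact not_comp_pair (not_comp_symm hik)
          | exact not_comp_pair hjk
          | exact not_comp_pair (not_comp_symm hjk)
    · exact Finset.card_eq_three.mpr ⟨i, j, k, hij', hik', hjk', rfl⟩
  · intro B hB
    exact anti_card_le_three hB

/-! ### completeness -/

lemma complete (S : Finset (Fin 27)) (hS : IdealS S) : ∃ n ∈ I56, S = tb n := by
  classical
  set T1 := Finset.univ.filter (fun j : Fin 17 => c1 j ∈ S) with hT1
  set T2 := Finset.univ.filter (fun j : Fin 8 => c2 j ∈ S) with hT2
  set T3 := Finset.univ.filter (fun j : Fin 2 => c3 j ∈ S) with hT3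
  have hd1 : ∀ i j : Fin 17, i ≤ j → j ∈ T1 → i ∈ T1 := by
    intro i j hij hj
    simp only [hT1, Finset.mem_filter, Finset.mem_univ, true_and] at hj ⊢
    exact hS _ _ hj (hc1 i j hij)
  have hd2 : ∀ i j : Fin 8, i ≤ j → j ∈ T2 → i ∈ T2 := by
    intro i j hij hj
    simp only [hT2, Finset.mem_filter, Finset.mem_univ, true_and] at hj ⊢
    exact hS _ _ hj (hc2 i j hij)
  have hd3 : ∀ i j : Fin 2, i ≤ j → j ∈ T3 → i ∈ T3 := by
    intro i j hij hj
    simp only [hT3, Finset.mem_filter, Finset.mem_univ, true_and] at hj ⊢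
    exact hS _ _ hj (hc3 i j hij)
  have hca : T1.card < 18 := by
    have h := Finset.card_le_univ T1
    simp only [Finset.card_univ, Fintype.card_fin] at h
    omega
  have hcb : T2.card < 9 := by
    have h := Finset.card_le_univ T2
    simp only [Finset.card_univ, Fintype.card_fin] at h
    omega
  have hcc : T3.card < 3 := by
    have h := Finset.card_le_univ T3
    simp only [Finset.card_univ, Fintype.card_fin] at h
    omega
  have hSU : S = T1.image c1 ∪ T2.image c2 ∪ T3.image c3 := by
    ext x
    simp only [Finset.mem_union, Finset.mem_image, hT1, hT2, hT3,
      Finset.mem_filter, Finset.mem_univ, true_and]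
    constructor
    · intro hx
      rcases hcover x with ⟨i, hi⟩ | ⟨i, hi⟩ | ⟨i, hi⟩
      · exact Or.inl (Or.inl ⟨i, by rw [hi]; exact hx, hi⟩)
      · exact Or.inl (Or.inr ⟨i, by rw [hi]; exact hx, hi⟩)
      · exact Or.inr ⟨i, by rw [hi]; exact hx, hi⟩
    · rintro ((⟨i, hiS, rfl⟩ | ⟨i, hiS, rfl⟩) | ⟨i, hiS, rfl⟩) <;> exact hiS
  have hp1 := prefix_eq T1 hd1
  have hp2 := prefix_eq T2 hd2
  have hp3 := prefix_eq T3 hd3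
  refine ⟨cm1 ⟨T1.card, hca⟩ ||| cm2 ⟨T2.card, hcb⟩ ||| cm3 ⟨T3.card, hcc⟩, ?_, ?_⟩
  case refine_2 =>
    rw [hSU]
    conv_lhs => rw [hp1, hp2, hp3]
    exact (hpm ⟨T1.card, hca⟩ ⟨T2.card, hcb⟩ ⟨T3.card, hcc⟩).symm
  case refine_1 =>
    apply henum
    apply (idealMM_iff _).mpr
    apply (idealS_tb _).mp
    have hSeq : S = tb (cm1 ⟨T1.card, hca⟩ ||| cm2 ⟨T2.card, hcb⟩ ||| cm3 ⟨T3.card, hcc⟩) := by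
      rw [hSU]
      conv_lhs => rw [hp1, hp2, hp3]
      exact (hpm ⟨T1.card, hca⟩ ⟨T2.card, hcb⟩ ⟨T3.card, hcc⟩).symm
    rw [← hSeq]
    exact hS

/-! ### the counting lemma -/

lemma count (P : Finset (Fin 7 → ℕ) → Prop) (T : Finset ℕ)
    (hT : ∀ n ∈ T, n ∈ I56)
    (h1 : ∀ n ∈ T, P ((tb n).image R))
    (h2 : ∀ n ∈ I56, P ((tb n).image R) → n ∈ T) :
    Nat.card {Y : Finset (Fin 7 → ℕ) // IsLowerIdeal Y ∧ P Y} = T.card := by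
  have hg : ∀ n : {n : ℕ // n ∈ T},
      IsLowerIdeal ((tb n.1).image R) ∧ P ((tb n.1).image R) := fun ⟨n, hn⟩ =>
    ⟨(ideal_transport _).mpr ((idealS_tb n).mpr ((idealMM_iff n).mp (hsoundMM n (hT n hn)))), h1 n hn⟩
  let G : {n : ℕ // n ∈ T} → {Y : Finset (Fin 7 → ℕ) // IsLowerIdeal Y ∧ P Y} :=
    fun n => ⟨(tb n.1).image R, hg n⟩
  have hGbij : Function.Bijective G := by
    constructor
    · rintro ⟨n, hn⟩ ⟨m, hm⟩ h
      have h' : (tb n).image R = (tb m).image R := congrArg Subtype.val h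
      have htb : tb n = tb m := Finset.image_injective hRinj' h'
      exact Subtype.ext (htbInj n (hT n hn) m (hT m hm) htb)
    · rintro ⟨Y, hI, hP⟩
      have hYrepr : (idxOf Y).image R = Y := image_idxOf hI.1
      have hIS : IdealS (idxOf Y) := (ideal_transport _).mp (by rwa [hYrepr])
      obtain ⟨n, hnI, hSn⟩ := complete (idxOf Y) hIS
      have hY : Y = (tb n).image R := by rw [← hSn, hYrepr]
      have hPn : P ((tb n).image R) := hY ▸ hP
      exact ⟨⟨n, h2 n hnI hPn⟩, Subtype.ext hY.symm⟩
  rw [Nat.card_congr (Equiv.ofBijective G hGbij).symm, Nat.card_eq_finsetCard]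

lemma width_count (w : ℕ) (Tw : Finset ℕ)
    (hsub : ∀ n ∈ Tw, n ∈ I56)
    (hwid : ∀ n ∈ Tw, WidthS (tb n) w)
    (huni : ∀ n ∈ I56, WidthS (tb n) w → n ∈ Tw) :
    Nat.card {Y : Finset (Fin 7 → ℕ) // IsLowerIdeal Y ∧ WidthIs Y w} = Tw.card := by
  refine count (fun Y => WidthIs Y w) Tw hsub ?_ ?_
  · intro n hn
    exact (width_transport (tb n) w).mpr (hwid n hn)
  · intro n hn hP
    exact huni n hn ((width_transport (tb n) w).mp hP)

lemma hpart0 : ∀ n ∈ W0, n ∈ I56 := by decide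
lemma hpart1 : ∀ n ∈ W1, n ∈ I56 := by decide
lemma hpart2 : ∀ n ∈ W2, n ∈ I56 := by decide
lemma hpart3 : ∀ n ∈ W3, n ∈ I56 := by decide

lemma huni0 : ∀ n ∈ I56, WidthS (tb n) 0 → n ∈ W0 := by
  intro n hn hw
  rcases hpart n hn with h | h | h | h
  · exact h
  · exact absurd (widthS_unique hw (width1 n h)) (by omega)
  · exact absurd (widthS_unique hw (width2 n h)) (by omega)
  · exact absurd (widthS_unique hw (width3 n h)) (by omega)

lemma huni1 : ∀ n ∈ I56, WidthS (tb n) 1 → n ∈ W1 := by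
  intro n hn hw
  rcases hpart n hn with h | h | h | h
  · exact absurd (widthS_unique hw (width0 n h)) (by omega)
  · exact h
  · exact absurd (widthS_unique hw (width2 n h)) (by omega)
  · exact absurd (widthS_unique hw (width3 n h)) (by omega)

lemma huni2 : ∀ n ∈ I56, WidthS (tb n) 2 → n ∈ W2 := by
  intro n hn hw
  rcases hpart n hn with h | h | h | h
  · exact absurd (widthS_unique hw (width0 n h)) (by omega)
  · exact absurd (widthS_unique hw (width1 n h)) (by omega)
  · exact h
  · exact absurd (widthS_unique hw (width3 n h)) (by omega)

lemma huni3 : ∀ n ∈ I56, WidthS (tb n) 3 → n ∈ W3 := by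
  intro n hn hw
  rcases hpart n hn with h | h | h | h
  · exact absurd (widthS_unique hw (width0 n h)) (by omega)
  · exact absurd (widthS_unique hw (width1 n h)) (by omega)
  · exact absurd (widthS_unique hw (width2 n h)) (by omega)
  · exact h

/-- The `e7(-25)` noncompact root poset has exactly 56 lower-order ideals:
1 of width 0, 7 of width 1, 27 of width 2, and 21 of width 3. -/
theorem e7_ideal_counts :
    Nat.card {Y : Finset (Fin 7 → ℕ) // IsLowerIdeal Y} = 56 ∧
    Nat.card {Y : Finset (Fin 7 → ℕ) // IsLowerIdeal Y ∧ WidthIs Y 0} = 1 ∧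
    Nat.card {Y : Finset (Fin 7 → ℕ) // IsLowerIdeal Y ∧ WidthIs Y 1} = 7 ∧
    Nat.card {Y : Finset (Fin 7 → ℕ) // IsLowerIdeal Y ∧ WidthIs Y 2} = 27 ∧
    Nat.card {Y : Finset (Fin 7 → ℕ) // IsLowerIdeal Y ∧ WidthIs Y 3} = 21 := by
  refine ⟨?_, ?_, ?_, ?_, ?_⟩
  · have h := count (fun _ => True) I56 (fun n h => h) (fun _ _ => trivial)
      (fun n h _ => h)
    have he : Nat.card {Y : Finset (Fin 7 → ℕ) // IsLowerIdeal Y} =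
        Nat.card {Y : Finset (Fin 7 → ℕ) // IsLowerIdeal Y ∧ True} :=
      Nat.card_congr (Equiv.subtypeEquivRight (by simp))
    rw [he, h]
    decide
  · rw [width_count 0 W0 hpart0 width0 huni0]; decide
  · rw [width_count 1 W1 hpart1 width1 huni1]; decide
  · rw [width_count 2 W2 hpart2 width2 huni2]; decide
  · rw [width_count 3 W3 hpart3 width3 huni3]; decide
end Stmt15
end
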